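/- arXiv:math/0205324 — 5 statements merged into one kernel-verified Lean document; each statement's English description precedes it below -/
import Mathlib

section
/- Let V be a vector space over ℂ and x ∈ End(V). Assume that x is locally nilpotent (for every v ∈ V there is n with x^n v = 0), that ⋂_{n>0} Im(x^n) = {0}, and that the quotient V/Im(x) is finite dimensional. Then V is finite dimensional. -/
/- STATEMENT 5: If `x : End(V)` is locally nilpotent, `⋂_{n>0} Im(x^n) = 0`, and
`V/Im(x)` is finite dimensional, then `V` is finite dimensional. -/

theorem statement5 (V : Type) [AddCommGroup V] [Module ℂ V] (x : V →ₗ[ℂ] V)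
    (hnil : ∀ v : V, ∃ n : ℕ, (x ^ n) v = 0)
    (hinter : (⨅ (n : ℕ) (_ : 0 < n), LinearMap.range (x ^ n)) = ⊥)
    (hfd : FiniteDimensional ℂ (V ⧸ LinearMap.range x)) :
    FiniteDimensional ℂ V := by
  classical
  -- choose a finite spanning family of the quotient and lift it
  obtain ⟨n, s, hs⟩ := Module.Finite.exists_fin (R := ℂ) (M := V ⧸ LinearMap.range x)
  have hsurj := (LinearMap.range x).mkQ_surjective
  choose v hv using fun i => hsurj (s i)
  set W : Submodule ℂ V := Submodule.span ℂ (Set.range v) with hW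
  have hWfd : FiniteDimensional ℂ W :=
    FiniteDimensional.span_of_finite ℂ (Set.finite_range v)
  -- W ⊔ range x = ⊤
  have hWtop : W ⊔ LinearMap.range x = ⊤ := by
    rw [sup_comm, ← Submodule.map_mkQ_eq_top, hW, Submodule.map_span, ← Set.range_comp]
    have : (LinearMap.range x).mkQ ∘ v = s := funext hv
    rw [this, hs]
  -- choose N killing W
  choose m hm using fun i => hnil (v i)
  set N : ℕ := if h : Nonempty (Fin n) then (Finset.univ.sup m) else 0 with hN
  have hxNW : Submodule.map (x ^ N) W = ⊥ := by
    rw [hW, Submodule.map_span, ← Set.range_comp]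
    refine le_bot_iff.mp (Submodule.span_le.mpr ?_)
    rintro _ ⟨i, rfl⟩
    have hle : m i ≤ N := by
      rw [hN]
      rw [dif_pos ⟨i⟩]
      exact Finset.le_sup (Finset.mem_univ i)
    have : (x ^ N) (v i) = 0 := by
      obtain ⟨k, hk⟩ := Nat.exists_eq_add_of_le hle
      rw [hk, add_comm, pow_add, Module.End.mul_apply, hm, map_zero]
    simpa using this
  -- the x-stable finite-dimensional subspace U
  set U : Submodule ℂ V := ⨆ k : Fin (N + 1), Submodule.map (x ^ (k : ℕ)) W with hU
  haveI : FiniteDimensional ℂ U := by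
    rw [hU]
    infer_instance
  have hUk : ∀ k : ℕ, Submodule.map (x ^ k) W ≤ U := by
    intro k
    by_cases hk : k ≤ N
    · exact le_iSup_of_le ⟨k, Nat.lt_succ_of_le hk⟩ le_rfl
    · obtain ⟨j, rfl⟩ := Nat.exists_eq_add_of_le (le_of_not_ge hk)
      have : x ^ (N + j) = (x ^ j).comp (x ^ N) := by
        rw [add_comm, pow_add]; rfl
      rw [this, Submodule.map_comp, hxNW, Submodule.map_bot]
      exact bot_le
  have hxU : Submodule.map x U ≤ U := by
    rw [hU, Submodule.map_iSup]
    refine iSup_le fun k => ?_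
    have : x.comp (x ^ (k : ℕ)) = x ^ ((k : ℕ) + 1) := by
      rw [pow_succ']; rfl
    rw [← Submodule.map_comp, this]
    exact hUk _
  -- key induction: U ⊔ range (x^n) = ⊤
  have hsup : ∀ k : ℕ, U ⊔ LinearMap.range (x ^ k) = ⊤ := by
    intro k
    induction k with
    | zero =>
      rw [pow_zero]
      simp [Module.End.one_eq_id, LinearMap.range_id]
    | succ k ih =>
      have hr : LinearMap.range (x ^ k) ≤ U ⊔ LinearMap.range (x ^ (k + 1)) := by
        have h1 : LinearMap.range (x ^ k) = Submodule.map (x ^ k) (W ⊔ LinearMap.range x) := by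
          rw [hWtop, Submodule.map_top]
        rw [h1, Submodule.map_sup]
        refine sup_le (le_sup_of_le_left (hUk k)) (le_sup_of_le_right ?_)
        have : (x ^ (k + 1)) = (x ^ k).comp x := by rw [pow_succ]; rfl
        rw [this, LinearMap.range_comp]
      rw [← top_le_iff, ← ih]
      exact sup_le le_sup_left (le_trans hr (sup_le le_sup_left le_sup_right))
  -- range (x^N) stabilizes and hence is ⊥
  have hU0 : Submodule.map (x ^ N) U = ⊥ := by
    rw [hU, Submodule.map_iSup]
    refine le_bot_iff.mp (iSup_le fun k => ?_)
    have h1 : (x ^ N).comp (x ^ (k : ℕ)) = (x ^ (k : ℕ)).comp (x ^ N) := by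
      rw [← Module.End.mul_eq_comp, ← Module.End.mul_eq_comp, ← pow_add, ← pow_add, add_comm]
    rw [← Submodule.map_comp, h1, Submodule.map_comp, hxNW, Submodule.map_bot]
  have hstab : ∀ q : ℕ, LinearMap.range (x ^ N) = LinearMap.range (x ^ (N + q)) := by
    intro q
    have h1 : LinearMap.range (x ^ N)
        = Submodule.map (x ^ N) (U ⊔ LinearMap.range (x ^ q)) := by
      rw [hsup, Submodule.map_top]
    rw [h1, Submodule.map_sup, hU0, bot_sup_eq, ← LinearMap.range_comp,
      ← Module.End.mul_eq_comp, ← pow_add]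
  have hmono : ∀ a b : ℕ, LinearMap.range (x ^ (a + b)) ≤ LinearMap.range (x ^ a) := by
    intro a b
    rw [pow_add, Module.End.mul_eq_comp]
    exact LinearMap.range_comp_le_range _ _
  have hbot : LinearMap.range (x ^ N) = ⊥ := by
    refine le_bot_iff.mp ?_
    rw [← hinter]
    refine le_iInf fun k => le_iInf fun hk => ?_
    rw [hstab k, add_comm]
    exact hmono k N
  have hUtop : U = ⊤ := by
    have := hsup N
    rwa [hbot, sup_bot_eq] at this
  have htop : FiniteDimensional ℂ (⊤ : Submodule ℂ V) := hUtop ▸ ‹FiniteDimensional ℂ U›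
  exact Submodule.topEquiv.finiteDimensional
end

section
/- Let g be a complex Lie algebra with a countable basis, let z₁, …, z_N be pairwise distinct complex numbers, and let M ≥ 1. Set B_M = (g ⊗ t^M ℂ[t]) U(g[t]) and B_{M,𝒵} = (g ⊗ ∏_{i=1}^N (t − z_i)^M ℂ[t]) U(g[t]); both are two-sided ideals of U(g[t]). Then the composition of Δ_𝒵 : U(g[t]) → U(g[t])^{⊗N} with the N-fold tensor product of the projections U(g[t]) → U(g[t])/B_M is a surjective algebra homomorphism with kernel B_{M,𝒵}; hence it induces an algebra isomorphism U(g[t])/B_{M,𝒵} ≅ (U(g[t])/B_M)^{⊗N}. -/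
open scoped TensorProduct
open UniversalEnvelopingAlgebra Polynomial PiTensorProduct

attribute [local instance 100] LieRing.ofAssociativeRing

noncomputable section

/-- The current Lie algebra `g[t] = ℂ[t] ⊗ g` is a Lie algebra over `ℂ`
(restriction of scalars of the `ℂ[t]`-Lie algebra structure). -/
instance curLieAlgebra (g : Type) [LieRing g] [LieAlgebra ℂ g] :
    LieAlgebra ℂ (Polynomial ℂ ⊗[ℂ] g) where
  lie_smul c x y := by
    have h := LieAlgebra.lie_smul (R := Polynomial ℂ) (L := Polynomial ℂ ⊗[ℂ] g)
      (algebraMap ℂ (Polynomial ℂ) c) x y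
    rwa [algebraMap_smul, algebraMap_smul] at h

variable (g : Type) [LieRing g] [LieAlgebra ℂ g]

/-- The current Lie algebra `g[t] = g ⊗ ℂ[t]`. -/
abbrev Cur := Polynomial ℂ ⊗[ℂ] g

/-- `U(g[t])`. -/
abbrev UC := UniversalEnvelopingAlgebra ℂ (Cur g)

/-- The canonical map `g[t] → U(g[t])`. -/
def ιC : Cur g →ₗ⁅ℂ⁆ UC g := UniversalEnvelopingAlgebra.ι ℂ

/-- The right ideal of `U` generated by a subset `s` (the span of all products
`x * u`, `x ∈ s`, `u ∈ U`). -/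
def rIdeal {U : Type} [Ring U] [Algebra ℂ U] (s : Set U) : Submodule ℂ U :=
  Submodule.span ℂ {y | ∃ x ∈ s, ∃ u : U, y = x * u}

/-- The subspace `U ⊗ ⋯ ⊗ X ⊗ ⋯ ⊗ U` (with `X` in the `i`-th slot) of `U^{⊗N}`. -/
def slotSub {U : Type} [Ring U] [Algebra ℂ U] {N : ℕ} (i : Fin N) (X : Set U) :
    Submodule ℂ (⨂[ℂ] _ : Fin N, U) :=
  Submodule.span ℂ {t | ∃ a : Fin N → U, a i ∈ X ∧ t = tprod ℂ a}

/-- `I^{(N)}(X₁, …, X_N) = ∑ᵢ U^{⊗(i-1)} ⊗ Xᵢ ⊗ U^{⊗(N-i)}`. -/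
def ITen {U : Type} [Ring U] [Algebra ℂ U] {N : ℕ} (X : Fin N → Set U) :
    Submodule ℂ (⨂[ℂ] _ : Fin N, U) :=
  ⨆ i, slotSub i (X i)

/-- The automorphism `φ_z` of `g[t]` sending `x ⊗ p(t)` to `x ⊗ p(t - z)`. -/
def phi (z : ℂ) : Cur g →ₗ[ℂ] Cur g :=
  LinearMap.rTensor g (Polynomial.aeval (Polynomial.X - Polynomial.C z)).toLinearMap

section Aux
set_option maxHeartbeats 1000000
set_option synthInstance.maxHeartbeats 400000
variable (g : Type) [LieRing g] [LieAlgebra ℂ g]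

lemma adjoin_range_iC : Algebra.adjoin ℂ (Set.range (ιC g)) = ⊤ := by
  set S := Algebra.adjoin ℂ (Set.range (ιC g)) with hS
  let f : Cur g →ₗ⁅ℂ⁆ S :=
    { toFun := fun v => ⟨ιC g v, Algebra.subset_adjoin ⟨v, rfl⟩⟩
      map_add' := fun a b => Subtype.ext ((ιC g).map_add a b)
      map_smul' := fun c a => Subtype.ext ((ιC g).map_smul c a)
      map_lie' := fun {a b} => Subtype.ext <| by
        change (ιC g) ⁅a, b⁆ = _
        rw [LieHom.map_lie]
        rfl }
  have h : S.val.comp (UniversalEnvelopingAlgebra.lift ℂ f) = AlgHom.id ℂ (UC g) := by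
    apply UniversalEnvelopingAlgebra.hom_ext
    apply LieHom.ext
    intro v
    simp only [LieHom.comp_apply]
    change S.val ((UniversalEnvelopingAlgebra.lift ℂ f) (UniversalEnvelopingAlgebra.ι ℂ v)) = _
    rw [UniversalEnvelopingAlgebra.lift_ι_apply]
    rfl
  apply top_unique
  intro u _
  have : S.val ((UniversalEnvelopingAlgebra.lift ℂ f) u) = u := by
    rw [← AlgHom.comp_apply, h]; rfl
  rw [← this]
  exact ((UniversalEnvelopingAlgebra.lift ℂ f) u).2

lemma U_induction {Pred : UC g → Prop}
    (hι : ∀ v, Pred (ιC g v)) (halg : ∀ c : ℂ, Pred (algebraMap ℂ (UC g) c))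
    (hadd : ∀ a b, Pred a → Pred b → Pred (a + b))
    (hmul : ∀ a b, Pred a → Pred b → Pred (a * b)) : ∀ u, Pred u := by
  intro u
  have hu : u ∈ Algebra.adjoin ℂ (Set.range (ιC g)) := by
    rw [adjoin_range_iC]; trivial
  exact Algebra.adjoin_induction (fun x hx => by obtain ⟨v, rfl⟩ := hx; exact hι v)
    halg (fun a b _ _ ha hb => hadd a b ha hb) (fun a b _ _ ha hb => hmul a b ha hb) hu

end Aux
lemma iC_sub (g : Type) [LieRing g] [LieAlgebra ℂ g] (a b : Cur g) :
    ιC g (a - b) = ιC g a - ιC g b := (ιC g).toLinearMap.map_sub a b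
def BSet (g : Type) [LieRing g] [LieAlgebra ℂ g] (P : Polynomial ℂ) : Set (Cur g) :=
  {w : Cur g | ∃ (q : Polynomial ℂ) (x : g), w = (P * q) ⊗ₜ[ℂ] x}

def BI (g : Type) [LieRing g] [LieAlgebra ℂ g] (P : Polynomial ℂ) : Submodule ℂ (UC g) :=
  rIdeal (ιC g '' BSet g P)

section Aux2
set_option maxHeartbeats 1000000
set_option synthInstance.maxHeartbeats 400000
variable (g : Type) [LieRing g] [LieAlgebra ℂ g]

lemma gen_mul_mem {P : Polynomial ℂ} {w : Cur g} (hw : w ∈ BSet g P) (u : UC g) :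
    ιC g w * u ∈ BI g P :=
  Submodule.subset_span ⟨ιC g w, ⟨w, hw, rfl⟩, u, rfl⟩

lemma mem_BI_of_dvd {P f : Polynomial ℂ} (x : g) (h : P ∣ f) :
    ιC g (f ⊗ₜ[ℂ] x) ∈ BI g P := by
  obtain ⟨q, rfl⟩ := h
  simpa using gen_mul_mem g (P := P) ⟨q, x, rfl⟩ 1

lemma BI_mul_right {P : Polynomial ℂ} {a : UC g} (ha : a ∈ BI g P) (u : UC g) :
    a * u ∈ BI g P := by
  induction ha using Submodule.span_induction with
  | mem y hy =>
      obtain ⟨-, ⟨w, hw, rfl⟩, v, rfl⟩ := hy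
      rw [mul_assoc]; exact gen_mul_mem g hw _
  | zero => simpa using Submodule.zero_mem _
  | add a b _ _ ha hb => rw [add_mul]; exact Submodule.add_mem _ ha hb
  | smul c a _ ha => rw [smul_mul_assoc]; exact Submodule.smul_mem _ c ha

lemma bracket_mem_span {P : Polynomial ℂ} (v : Cur g) {w : Cur g} (hw : w ∈ BSet g P) :
    ⁅v, w⁆ ∈ Submodule.span ℂ (BSet g P) := by
  obtain ⟨q, x, rfl⟩ := hw
  induction v using TensorProduct.induction_on with
  | zero =>
      have h0 : ⁅(0 : Cur g), ((P * q) ⊗ₜ[ℂ] x : Cur g)⁆ = 0 := zero_lie (M := Cur g) _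
      rw [h0]; exact Submodule.zero_mem _
  | tmul r y =>
      have h1 : ⁅r ⊗ₜ[ℂ] y, (P * q) ⊗ₜ[ℂ] x⁆ = (P * (q * r)) ⊗ₜ[ℂ] ⁅y, x⁆ := by
        rw [LieAlgebra.ExtendScalars.bracket_tmul]
        congr 1; ring
      rw [h1]
      exact Submodule.subset_span ⟨q * r, ⁅y, x⁆, rfl⟩
  | add a b ha hb =>
      have h2 : ⁅a + b, (P * q) ⊗ₜ[ℂ] x⁆ = ⁅a, (P * q) ⊗ₜ[ℂ] x⁆ + ⁅b, (P * q) ⊗ₜ[ℂ] x⁆ :=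
        add_lie (M := Cur g) a b ((P * q) ⊗ₜ[ℂ] x)
      rw [h2]; exact Submodule.add_mem _ ha hb

lemma iota_span_mul_mem {P : Polynomial ℂ} {m : Cur g}
    (hm : m ∈ Submodule.span ℂ (BSet g P)) (u : UC g) : ιC g m * u ∈ BI g P := by
  induction hm using Submodule.span_induction with
  | mem w hw => exact gen_mul_mem g hw u
  | zero => simpa using Submodule.zero_mem _
  | add a b _ _ ha hb => rw [_root_.map_add (ιC g), add_mul]; exact Submodule.add_mem _ ha hb
  | smul c a _ ha => rw [_root_.map_smul (ιC g), smul_mul_assoc]; exact Submodule.smul_mem _ c ha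

lemma BI_mul_left {P : Polynomial ℂ} : ∀ (u : UC g), ∀ a ∈ BI g P, u * a ∈ BI g P := by
  refine U_induction g ?_ ?_ ?_ ?_
  · intro v a ha
    induction ha using Submodule.span_induction with
    | mem y hy =>
        obtain ⟨-, ⟨w, hw, rfl⟩, v', rfl⟩ := hy
        have key : ιC g v * (ιC g w * v') =
            ιC g w * (ιC g v * v') + ιC g ⁅v, w⁆ * v' := by
          have hlie : ιC g ⁅v, w⁆ = ιC g v * ιC g w - ιC g w * ιC g v := by
            rw [LieHom.map_lie]; rfl
          rw [hlie]; noncomm_ring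
        rw [key]
        exact Submodule.add_mem _ (gen_mul_mem g hw _)
          (iota_span_mul_mem g (bracket_mem_span g v hw) v')
    | zero => simpa using Submodule.zero_mem _
    | add a b _ _ ha hb => rw [mul_add]; exact Submodule.add_mem _ ha hb
    | smul c a _ ha => rw [mul_smul_comm]; exact Submodule.smul_mem _ c ha
  · intro c a ha
    rw [Algebra.algebraMap_eq_smul_one, smul_mul_assoc, one_mul]
    exact Submodule.smul_mem _ c ha
  · intro x y hx hy a ha
    rw [add_mul]; exact Submodule.add_mem _ (hx a ha) (hy a ha)
  · intro x y hx hy a ha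
    rw [mul_assoc]; exact hx _ (hy a ha)

end Aux2
section Poly
set_option maxHeartbeats 1000000

lemma aeval_shift_inv (c : ℂ) (f : Polynomial ℂ) :
    Polynomial.aeval (Polynomial.X + Polynomial.C c)
      (Polynomial.aeval (Polynomial.X - Polynomial.C c) f) = f := by
  rw [← Polynomial.comp_eq_aeval, ← Polynomial.comp_eq_aeval, Polynomial.comp_assoc]
  simp [Polynomial.sub_comp]

lemma aeval_shift_inv' (c : ℂ) (f : Polynomial ℂ) :
    Polynomial.aeval (Polynomial.X - Polynomial.C c)
      (Polynomial.aeval (Polynomial.X + Polynomial.C c) f) = f := by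
  rw [← Polynomial.comp_eq_aeval, ← Polynomial.comp_eq_aeval, Polynomial.comp_assoc]
  simp [Polynomial.add_comp]

lemma dvd_aeval_shift {c : ℂ} {M : ℕ} {f : Polynomial ℂ}
    (h : (Polynomial.X - Polynomial.C c) ^ M ∣ f) :
    Polynomial.X ^ M ∣ Polynomial.aeval (Polynomial.X + Polynomial.C c) f := by
  have h2 := map_dvd (Polynomial.aeval (Polynomial.X + Polynomial.C c)) h
  simpa using h2

lemma exists_crt {N : ℕ} (z : Fin N → ℂ) (hz : Function.Injective z) (M : ℕ) (i : Fin N) :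
    ∃ e : Polynomial ℂ,
      (∀ j, j ≠ i → (Polynomial.X - Polynomial.C (z j)) ^ M ∣ e) ∧
      (Polynomial.X - Polynomial.C (z i)) ^ M ∣ (e - 1) := by
  have hcop : IsCoprime ((Polynomial.X - Polynomial.C (z i)) ^ M)
      (∏ j ∈ Finset.univ.erase i, (Polynomial.X - Polynomial.C (z j)) ^ M) := by
    apply IsCoprime.prod_right
    intro j hj
    exact ((Polynomial.pairwise_coprime_X_sub_C hz) (Finset.ne_of_mem_erase hj).symm).pow
  obtain ⟨a, b, hab⟩ := hcop
  refine ⟨b * ∏ j ∈ Finset.univ.erase i, (Polynomial.X - Polynomial.C (z j)) ^ M, ?_, ?_⟩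
  · intro j hj
    exact Dvd.dvd.mul_left (Finset.dvd_prod_of_mem _ (Finset.mem_erase.2 ⟨hj, Finset.mem_univ j⟩)) b
  · refine ⟨-a, ?_⟩
    have : b * ∏ j ∈ Finset.univ.erase i, (Polynomial.X - Polynomial.C (z j)) ^ M - 1 =
        -(a * (Polynomial.X - Polynomial.C (z i)) ^ M) := by
      rw [← hab]; ring
    rw [this]; ring

lemma prod_dvd_of_forall {N : ℕ} (z : Fin N → ℂ) (hz : Function.Injective z) (M : ℕ)
    {f : Polynomial ℂ} (h : ∀ j, (Polynomial.X - Polynomial.C (z j)) ^ M ∣ f) :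
    (∏ j, (Polynomial.X - Polynomial.C (z j)) ^ M) ∣ f := by
  apply Finset.prod_dvd_of_coprime
  · intro i _ j _ hij
    exact ((Polynomial.pairwise_coprime_X_sub_C hz) hij).pow
  · exact fun j _ => h j

end Poly
section Fact
set_option maxHeartbeats 1000000

lemma factor_through {R' Q' A' : Type} [Ring R'] [Algebra ℂ R'] [Ring Q'] [Algebra ℂ Q']
    [Ring A'] [Algebra ℂ A'] (p : R' →ₐ[ℂ] Q') (hs : Function.Surjective p) (f : R' →ₐ[ℂ] A')
    (h : ∀ u, p u = 0 → f u = 0) : ∃ f' : Q' →ₐ[ℂ] A', ∀ u, f' (p u) = f u := by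
  have key : ∀ u v, p u = p v → f u = f v := fun u v huv => by
    have := h (u - v) (by rw [map_sub, huv, sub_self])
    rwa [map_sub, sub_eq_zero] at this
  choose sec hsec using hs
  refine ⟨{ toFun := fun q => f (sec q)
            map_one' := by show f (sec 1) = 1; rw [key (sec 1) 1 (by rw [hsec, _root_.map_one]), _root_.map_one]
            map_zero' := by show f (sec 0) = 0; rw [key (sec 0) 0 (by rw [hsec, _root_.map_zero]), _root_.map_zero]
            map_mul' := fun q r => by
              show f (sec (q * r)) = f (sec q) * f (sec r)
              rw [key (sec (q * r)) (sec q * sec r) (by rw [hsec, _root_.map_mul, hsec, hsec]), _root_.map_mul]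
            map_add' := fun q r => by
              show f (sec (q + r)) = f (sec q) + f (sec r)
              rw [key (sec (q + r)) (sec q + sec r) (by rw [hsec, _root_.map_add, hsec, hsec]), _root_.map_add]
            commutes' := fun r => by
              show f (sec (algebraMap ℂ Q' r)) = algebraMap ℂ A' r
              rw [key (sec (algebraMap ℂ Q' r)) (algebraMap ℂ R' r)
                (by rw [hsec, AlgHom.commutes]), AlgHom.commutes] }, ?_⟩
  intro u
  exact key (sec (p u)) u (hsec _)

lemma ofFn_prod_mul {A : Type} [Monoid A] : ∀ {n : ℕ} (a b : Fin n → A),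
    (∀ i j, i ≠ j → Commute (a i) (b j)) →
    (List.ofFn a).prod * (List.ofFn b).prod = (List.ofFn fun i => a i * b i).prod := by
  intro n
  induction n with
  | zero => intro a b _; simp
  | succ n ih =>
      intro a b hcomm
      rw [List.ofFn_succ, List.ofFn_succ, List.ofFn_succ, List.prod_cons, List.prod_cons,
        List.prod_cons]
      have hc : Commute (b 0) (List.ofFn fun i : Fin n => a i.succ).prod := by
        apply Commute.list_prod_right
        intro y hy
        rw [List.mem_ofFn] at hy
        obtain ⟨i, rfl⟩ := hy
        exact (hcomm i.succ 0 (Fin.succ_ne_zero i)).symm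
      calc a 0 * (List.ofFn fun i : Fin n => a i.succ).prod *
            (b 0 * (List.ofFn fun i : Fin n => b i.succ).prod)
          = a 0 * b 0 * ((List.ofFn fun i : Fin n => a i.succ).prod *
            (List.ofFn fun i : Fin n => b i.succ).prod) := by
            rw [mul_assoc (a 0), ← mul_assoc _ (b 0), ← hc.eq, mul_assoc (b 0), ← mul_assoc (a 0)]
        _ = a 0 * b 0 * (List.ofFn fun i : Fin n => a i.succ * b i.succ).prod := by
            rw [ih _ _ (fun i j hij => hcomm i.succ j.succ (fun hx => hij (Fin.succ_injective _ hx)))]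

lemma ofFn_prod_single {A : Type} [Monoid A] : ∀ {n : ℕ} (h : Fin n → A) (j : Fin n),
    (∀ i, i ≠ j → h i = 1) → (List.ofFn h).prod = h j := by
  intro n
  induction n with
  | zero => intro _ j _; exact absurd j.2 (by simp)
  | succ n ih =>
      intro h j hone
      rw [List.ofFn_succ, List.prod_cons]
      rcases Fin.eq_zero_or_eq_succ j with hj | ⟨j', rfl⟩
      · subst hj
        have : ∀ i : Fin n, h i.succ = 1 := fun i => hone i.succ (Fin.succ_ne_zero i)
        have hl : (List.ofFn fun i : Fin n => h i.succ).prod = 1 := by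
          apply List.prod_eq_one
          intro y hy
          rw [List.mem_ofFn] at hy
          obtain ⟨i, rfl⟩ := hy
          exact this i
        rw [hl, mul_one]
      · have h0 : h 0 = 1 := hone 0 (Ne.symm (Fin.succ_ne_zero j'))
        rw [h0, one_mul]
        exact ih (fun i => h i.succ) j'
          (fun i hi => hone i.succ (fun hx => hi (Fin.succ_injective _ hx)))

end Fact
section Quot
set_option maxHeartbeats 1000000
set_option synthInstance.maxHeartbeats 400000
variable (g : Type) [LieRing g] [LieAlgebra ℂ g] (P : Polynomial ℂ)

def Jcon : RingCon (UC g) := (TwoSidedIdeal.span (ιC g '' BSet g P)).ringCon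

instance AQalg : Algebra ℂ (Jcon g P).Quotient where
  algebraMap := (RingCon.mk' (Jcon g P)).comp (algebraMap ℂ (UC g))
  commutes' := fun r q => by
    induction q using Quotient.inductionOn' with
    | h u =>
        show (RingCon.mk' (Jcon g P)) (algebraMap ℂ (UC g) r) * (RingCon.mk' (Jcon g P)) u
            = (RingCon.mk' (Jcon g P)) u * (RingCon.mk' (Jcon g P)) (algebraMap ℂ (UC g) r)
        rw [← _root_.map_mul, ← _root_.map_mul, Algebra.commutes]
  smul_def' := fun r q => by
    induction q using Quotient.inductionOn' with
    | h u =>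
        show r • ((RingCon.mk' (Jcon g P)) u)
            = (RingCon.mk' (Jcon g P)) (algebraMap ℂ (UC g) r) * (RingCon.mk' (Jcon g P)) u
        rw [← _root_.map_mul, ← Algebra.smul_def]
        rfl

def piQ : UC g →ₐ[ℂ] (Jcon g P).Quotient :=
  { RingCon.mk' (Jcon g P) with commutes' := fun _ => rfl }

lemma piQ_eq_zero_iff (u : UC g) :
    piQ g P u = 0 ↔ u ∈ TwoSidedIdeal.span (ιC g '' BSet g P) := by
  have h0 : (0 : (Jcon g P).Quotient) = (RingCon.mk' (Jcon g P)) 0 := rfl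
  show (RingCon.mk' (Jcon g P)) u = 0 ↔ _
  rw [h0]
  change (u : (Jcon g P).Quotient) = ((0 : UC g) : (Jcon g P).Quotient) ↔ _
  rw [RingCon.eq]
  change (TwoSidedIdeal.span (ιC g '' BSet g P)).ringCon u 0 ↔ _
  rw [TwoSidedIdeal.rel_iff, sub_zero]

lemma span_le_BI : ∀ u ∈ TwoSidedIdeal.span (ιC g '' BSet g P), u ∈ BI g P := by
  intro u hu
  have hBI : ∃ I : TwoSidedIdeal (UC g), (I : Set (UC g)) = (BI g P : Set (UC g)) := by
    refine ⟨TwoSidedIdeal.mk' (BI g P : Set (UC g)) (Submodule.zero_mem _)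
      (fun ha hb => Submodule.add_mem _ ha hb) (fun ha => Submodule.neg_mem _ ha)
      (fun {x y} hy => BI_mul_left g x _ hy) (fun {x y} hx => BI_mul_right g hx y), ?_⟩
    exact TwoSidedIdeal.coe_mk' _ _ _ _ _ _
  obtain ⟨I, hI⟩ := hBI
  rw [TwoSidedIdeal.mem_span_iff] at hu
  have := hu I (by
    intro y hy
    obtain ⟨w, hw, rfl⟩ := hy
    rw [hI]
    simpa using gen_mul_mem g hw 1)
  rwa [← SetLike.mem_coe, hI] at this

lemma piQ_iota_zero {f : Polynomial ℂ} (x : g) (h : P ∣ f) :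
    piQ g P (ιC g (f ⊗ₜ[ℂ] x)) = 0 := by
  rw [piQ_eq_zero_iff]
  apply TwoSidedIdeal.subset_span
  obtain ⟨q, rfl⟩ := h
  exact ⟨(P * q) ⊗ₜ[ℂ] x, ⟨q, x, rfl⟩, rfl⟩

lemma piQ_iota_span_zero {m : Cur g} (hm : m ∈ Submodule.span ℂ (BSet g P)) :
    piQ g P (ιC g m) = 0 := by
  induction hm using Submodule.span_induction with
  | mem w hw => obtain ⟨q, x, rfl⟩ := hw; exact piQ_iota_zero g P x ⟨q, rfl⟩
  | zero => rw [_root_.map_zero (ιC g), _root_.map_zero]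
  | add a b _ _ ha hb => rw [_root_.map_add (ιC g), _root_.map_add, ha, hb, add_zero]
  | smul c a _ ha => rw [_root_.map_smul (ιC g), _root_.map_smul, ha, smul_zero]

end Quot
section CurLemmas
set_option maxHeartbeats 1000000
set_option synthInstance.maxHeartbeats 400000
variable (g : Type) [LieRing g] [LieAlgebra ℂ g]

lemma cur_add_lie (a b w : Cur g) : ⁅a + b, w⁆ = ⁅a, w⁆ + ⁅b, w⁆ := add_lie (M := Cur g) a b w
lemma cur_lie_add (a w w' : Cur g) : ⁅a, w + w'⁆ = ⁅a, w⁆ + ⁅a, w'⁆ := lie_add (M := Cur g) a w w'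
lemma cur_zero_lie (w : Cur g) : ⁅(0 : Cur g), w⁆ = 0 := zero_lie (M := Cur g) w
lemma cur_lie_zero (a : Cur g) : ⁅a, (0 : Cur g)⁆ = 0 := lie_zero (M := Cur g) a
lemma cur_smul_lie (c : ℂ) (a w : Cur g) : ⁅c • a, w⁆ = c • ⁅a, w⁆ := smul_lie c a w
lemma cur_lie_smul (c : ℂ) (a w : Cur g) : ⁅a, c • w⁆ = c • ⁅a, w⁆ := lie_smul c a w

def sLin (c : ℂ) (E : Polynomial ℂ) : Polynomial ℂ →ₗ[ℂ] Polynomial ℂ :=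
  (LinearMap.mulLeft ℂ E).comp (Polynomial.aeval (Polynomial.X - Polynomial.C c)).toLinearMap

lemma sLin_apply (c : ℂ) (E f : Polynomial ℂ) :
    sLin c E f = E * Polynomial.aeval (Polynomial.X - Polynomial.C c) f := rfl

def mQ (c : ℂ) (E : Polynomial ℂ) : Cur g →ₗ[ℂ] Cur g := LinearMap.rTensor g (sLin c E)

lemma mQ_tmul (c : ℂ) (E f : Polynomial ℂ) (x : g) :
    mQ g c E (f ⊗ₜ[ℂ] x) = (E * Polynomial.aeval (Polynomial.X - Polynomial.C c) f) ⊗ₜ[ℂ] x :=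
  rfl

end CurLemmas

section EDvd
variable {N : ℕ} (z : Fin N → ℂ) (hz : Function.Injective z) (M : ℕ)
    (e : Fin N → Polynomial ℂ)
    (he1 : ∀ i j, j ≠ i → (Polynomial.X - Polynomial.C (z j)) ^ M ∣ e i)
    (he2 : ∀ i, (Polynomial.X - Polynomial.C (z i)) ^ M ∣ (e i - 1))
include hz he1 he2

lemma dvd_ei_mul_sub_one (i : Fin N) :
    (∏ j, (Polynomial.X - Polynomial.C (z j)) ^ M) ∣ e i * (e i - 1) := by
  apply prod_dvd_of_forall z hz
  intro j
  by_cases hj : j = i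
  · subst hj; exact Dvd.dvd.mul_left (he2 j) _
  · exact Dvd.dvd.mul_right (he1 i j hj) _

lemma dvd_ei_mul_ej {i j : Fin N} (hij : i ≠ j) :
    (∏ k, (Polynomial.X - Polynomial.C (z k)) ^ M) ∣ e i * e j := by
  apply prod_dvd_of_forall z hz
  intro k
  by_cases hk : k = i
  · subst hk; exact Dvd.dvd.mul_left (he1 j k hij) _
  · exact Dvd.dvd.mul_right (he1 i k hk) _

lemma dvd_ei_mul_pow (i : Fin N) :
    (∏ j, (Polynomial.X - Polynomial.C (z j)) ^ M) ∣
      e i * (Polynomial.X - Polynomial.C (z i)) ^ M := by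
  apply prod_dvd_of_forall z hz
  intro j
  by_cases hj : j = i
  · subst hj; exact Dvd.dvd.mul_left dvd_rfl _
  · exact Dvd.dvd.mul_right (he1 i j hj) _

lemma dvd_one_sub_sum :
    (∏ j, (Polynomial.X - Polynomial.C (z j)) ^ M) ∣ (1 - ∑ j, e j) := by
  apply prod_dvd_of_forall z hz
  intro k
  have hsum : ∑ j, e j = e k + ∑ j ∈ Finset.univ.erase k, e j := by
    rw [← Finset.add_sum_erase _ _ (Finset.mem_univ k)]
  have : (1 : Polynomial ℂ) - ∑ j, e j
      = -((e k - 1) + ∑ j ∈ Finset.univ.erase k, e j) := by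
    rw [hsum]; ring
  rw [this]
  apply Dvd.dvd.neg_right
  apply dvd_add
  · exact he2 k
  · exact Finset.dvd_sum (fun j hj => he1 j k (Finset.ne_of_mem_erase hj).symm)
end EDvd
def PZ {N : ℕ} (z : Fin N → ℂ) (M : ℕ) : Polynomial ℂ :=
  ∏ j, (Polynomial.X - Polynomial.C (z j)) ^ M

section Heart
set_option maxHeartbeats 1000000
set_option synthInstance.maxHeartbeats 400000
variable (g : Type) [LieRing g] [LieAlgebra ℂ g]

lemma bracket_mQ_mem (P : Polynomial ℂ) (c c' : ℂ) (E E' : Polynomial ℂ)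
    (hd : P ∣ E * E') (x y : Cur g) :
    ⁅mQ g c E x, mQ g c' E' y⁆ ∈ Submodule.span ℂ (BSet g P) := by
  induction x using TensorProduct.induction_on with
  | zero => rw [_root_.map_zero, cur_zero_lie]; exact Submodule.zero_mem _
  | add x1 x2 h1 h2 =>
      rw [_root_.map_add, cur_add_lie]; exact Submodule.add_mem _ h1 h2
  | tmul a u =>
      induction y using TensorProduct.induction_on with
      | zero => rw [_root_.map_zero, cur_lie_zero]; exact Submodule.zero_mem _
      | add y1 y2 h1 h2 =>
          rw [_root_.map_add, cur_lie_add]; exact Submodule.add_mem _ h1 h2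
      | tmul b v =>
          rw [mQ_tmul, mQ_tmul, LieAlgebra.ExtendScalars.bracket_tmul]
          obtain ⟨q0, hq0⟩ := hd
          have hc : E * Polynomial.aeval (Polynomial.X - Polynomial.C c) a *
              (E' * Polynomial.aeval (Polynomial.X - Polynomial.C c') b) =
              P * (q0 * (Polynomial.aeval (Polynomial.X - Polynomial.C c) a *
                Polynomial.aeval (Polynomial.X - Polynomial.C c') b)) := by
            linear_combination (Polynomial.aeval (Polynomial.X - Polynomial.C c) a *
              Polynomial.aeval (Polynomial.X - Polynomial.C c') b) * hq0
          rw [hc]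
          exact Submodule.subset_span ⟨_, _, rfl⟩

lemma mQ_bracket_mem (P : Polynomial ℂ) (c : ℂ) (E : Polynomial ℂ)
    (hd : P ∣ E - E * E) (x y : Cur g) :
    mQ g c E ⁅x, y⁆ - ⁅mQ g c E x, mQ g c E y⁆ ∈ Submodule.span ℂ (BSet g P) := by
  induction x using TensorProduct.induction_on with
  | zero =>
      rw [cur_zero_lie, _root_.map_zero, cur_zero_lie, sub_zero]
      exact Submodule.zero_mem _
  | add x1 x2 h1 h2 =>
      rw [cur_add_lie, _root_.map_add, _root_.map_add, cur_add_lie]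
      have : mQ g c E ⁅x1, y⁆ + mQ g c E ⁅x2, y⁆ -
          (⁅mQ g c E x1, mQ g c E y⁆ + ⁅mQ g c E x2, mQ g c E y⁆) =
          (mQ g c E ⁅x1, y⁆ - ⁅mQ g c E x1, mQ g c E y⁆) +
          (mQ g c E ⁅x2, y⁆ - ⁅mQ g c E x2, mQ g c E y⁆) := by abel
      rw [this]
      exact Submodule.add_mem _ h1 h2
  | tmul a u =>
      induction y using TensorProduct.induction_on with
      | zero =>
          rw [cur_lie_zero, _root_.map_zero, cur_lie_zero, sub_zero]
          exact Submodule.zero_mem _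
      | add y1 y2 h1 h2 =>
          rw [cur_lie_add, _root_.map_add, _root_.map_add, cur_lie_add]
          have : mQ g c E ⁅a ⊗ₜ[ℂ] u, y1⁆ + mQ g c E ⁅a ⊗ₜ[ℂ] u, y2⁆ -
              (⁅mQ g c E (a ⊗ₜ[ℂ] u), mQ g c E y1⁆ + ⁅mQ g c E (a ⊗ₜ[ℂ] u), mQ g c E y2⁆) =
              (mQ g c E ⁅a ⊗ₜ[ℂ] u, y1⁆ - ⁅mQ g c E (a ⊗ₜ[ℂ] u), mQ g c E y1⁆) +
              (mQ g c E ⁅a ⊗ₜ[ℂ] u, y2⁆ - ⁅mQ g c E (a ⊗ₜ[ℂ] u), mQ g c E y2⁆) := by abel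
          rw [this]
          exact Submodule.add_mem _ h1 h2
      | tmul b v =>
          rw [LieAlgebra.ExtendScalars.bracket_tmul, mQ_tmul, mQ_tmul, mQ_tmul,
            LieAlgebra.ExtendScalars.bracket_tmul]
          obtain ⟨q0, hq0⟩ := hd
          have hc : E * Polynomial.aeval (Polynomial.X - Polynomial.C c) (a * b) =
              (P * q0) * (Polynomial.aeval (Polynomial.X - Polynomial.C c) a *
                Polynomial.aeval (Polynomial.X - Polynomial.C c) b) +
              (E * Polynomial.aeval (Polynomial.X - Polynomial.C c) a) *
              (E * Polynomial.aeval (Polynomial.X - Polynomial.C c) b) := by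
            rw [_root_.map_mul]
            linear_combination (Polynomial.aeval (Polynomial.X - Polynomial.C c) a *
              Polynomial.aeval (Polynomial.X - Polynomial.C c) b) * hq0
          rw [hc, TensorProduct.add_tmul, add_sub_cancel_right]
          have : (P * q0) * (Polynomial.aeval (Polynomial.X - Polynomial.C c) a *
                Polynomial.aeval (Polynomial.X - Polynomial.C c) b) =
              P * (q0 * (Polynomial.aeval (Polynomial.X - Polynomial.C c) a *
                Polynomial.aeval (Polynomial.X - Polynomial.C c) b)) := by ring
          rw [this]
          exact Submodule.subset_span ⟨_, _, rfl⟩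

variable {N M : ℕ} (z : Fin N → ℂ) (e : Fin N → Polynomial ℂ)

def LiQ (hz : Function.Injective z)
    (he1 : ∀ i j, j ≠ i → (Polynomial.X - Polynomial.C (z j)) ^ M ∣ e i)
    (he2 : ∀ i, (Polynomial.X - Polynomial.C (z i)) ^ M ∣ (e i - 1)) (i : Fin N) : Cur g →ₗ⁅ℂ⁆ (Jcon g (PZ z M)).Quotient where
  toLinearMap := ((piQ g (PZ z M)).toLinearMap.comp (ιC g).toLinearMap).comp
    (mQ g (z i) (e i))
  map_lie' := by
    intro x y
    show piQ g (PZ z M) (ιC g (mQ g (z i) (e i) ⁅x, y⁆)) =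
      ⁅piQ g (PZ z M) (ιC g (mQ g (z i) (e i) x)), piQ g (PZ z M) (ιC g (mQ g (z i) (e i) y))⁆
    rw [Ring.lie_def]
    have hd : PZ z M ∣ e i - e i * e i := by
      have h2 : e i - e i * e i = -(e i * (e i - 1)) := by ring
      rw [h2]
      exact Dvd.dvd.neg_right (dvd_ei_mul_sub_one z hz M e he1 he2 i)
    have h0 := piQ_iota_span_zero g (PZ z M)
      (mQ_bracket_mem g (PZ z M) (z i) (e i) hd x y)
    have h1 : piQ g (PZ z M) (ιC g (mQ g (z i) (e i) ⁅x, y⁆)) =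
        piQ g (PZ z M) (ιC g ⁅mQ g (z i) (e i) x, mQ g (z i) (e i) y⁆) := by
      have hsub : ιC g (mQ g (z i) (e i) ⁅x, y⁆ - ⁅mQ g (z i) (e i) x, mQ g (z i) (e i) y⁆)
          = ιC g (mQ g (z i) (e i) ⁅x, y⁆) - ιC g ⁅mQ g (z i) (e i) x, mQ g (z i) (e i) y⁆ :=
        (ιC g).toLinearMap.map_sub _ _
      rw [hsub, _root_.map_sub, sub_eq_zero] at h0
      exact h0
    have h2 : ιC g ⁅mQ g (z i) (e i) x, mQ g (z i) (e i) y⁆ =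
        ιC g (mQ g (z i) (e i) x) * ιC g (mQ g (z i) (e i) y) -
        ιC g (mQ g (z i) (e i) y) * ιC g (mQ g (z i) (e i) x) := by
      rw [LieHom.map_lie]; rfl
    rw [h1, h2, _root_.map_sub, _root_.map_mul, _root_.map_mul]

def etaQ (hz : Function.Injective z)
    (he1 : ∀ i j, j ≠ i → (Polynomial.X - Polynomial.C (z j)) ^ M ∣ e i)
    (he2 : ∀ i, (Polynomial.X - Polynomial.C (z i)) ^ M ∣ (e i - 1)) (i : Fin N) : UC g →ₐ[ℂ] (Jcon g (PZ z M)).Quotient :=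
  UniversalEnvelopingAlgebra.lift ℂ (LiQ g z e hz he1 he2 i)

lemma etaQ_iota (hz : Function.Injective z)
    (he1 : ∀ i j, j ≠ i → (Polynomial.X - Polynomial.C (z j)) ^ M ∣ e i)
    (he2 : ∀ i, (Polynomial.X - Polynomial.C (z i)) ^ M ∣ (e i - 1)) (i : Fin N) (v : Cur g) :
    etaQ g z e hz he1 he2 i (ιC g v) = piQ g (PZ z M) (ιC g (mQ g (z i) (e i) v)) :=
  UniversalEnvelopingAlgebra.lift_ι_apply ℂ (LiQ g z e hz he1 he2 i) v

lemma etaQ_BM (hz : Function.Injective z)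
    (he1 : ∀ i j, j ≠ i → (Polynomial.X - Polynomial.C (z j)) ^ M ∣ e i)
    (he2 : ∀ i, (Polynomial.X - Polynomial.C (z i)) ^ M ∣ (e i - 1)) (i : Fin N) :
    ∀ u ∈ BI g (Polynomial.X ^ M), etaQ g z e hz he1 he2 i u = 0 := by
  intro u hu
  induction hu using Submodule.span_induction with
  | mem y hy =>
      obtain ⟨-, ⟨w, ⟨q, x, rfl⟩, rfl⟩, v, rfl⟩ := hy
      rw [_root_.map_mul, etaQ_iota g z e hz he1 he2, mQ_tmul]
      have hc : e i * Polynomial.aeval (Polynomial.X - Polynomial.C (z i))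
          (Polynomial.X ^ M * q) = (e i * (Polynomial.X - Polynomial.C (z i)) ^ M) *
          ((Polynomial.X - Polynomial.C (z i)) ^ 0 *
            Polynomial.aeval (Polynomial.X - Polynomial.C (z i)) q) := by
        rw [_root_.map_mul, map_pow, Polynomial.aeval_X]
        ring
      rw [hc]
      have hdvd : PZ z M ∣ (e i * (Polynomial.X - Polynomial.C (z i)) ^ M) *
          ((Polynomial.X - Polynomial.C (z i)) ^ 0 *
            Polynomial.aeval (Polynomial.X - Polynomial.C (z i)) q) :=
        Dvd.dvd.mul_right (dvd_ei_mul_pow z hz M e he1 he2 i) _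
      rw [piQ_iota_zero g (PZ z M) x hdvd, zero_mul]
  | zero => exact _root_.map_zero _
  | add a b _ _ ha hb => rw [_root_.map_add, ha, hb, add_zero]
  | smul c a _ ha => rw [_root_.map_smul, ha, smul_zero]

lemma etaQ_commute (hz : Function.Injective z)
    (he1 : ∀ i j, j ≠ i → (Polynomial.X - Polynomial.C (z j)) ^ M ∣ e i)
    (he2 : ∀ i, (Polynomial.X - Polynomial.C (z i)) ^ M ∣ (e i - 1))
    {i j : Fin N} (hij : i ≠ j) :
    ∀ u v : UC g, Commute (etaQ g z e hz he1 he2 i u) (etaQ g z e hz he1 he2 j v) := by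
  have base : ∀ x y : Cur g,
      Commute (etaQ g z e hz he1 he2 i (ιC g x)) (etaQ g z e hz he1 he2 j (ιC g y)) := by
    intro x y
    rw [etaQ_iota g z e hz he1 he2, etaQ_iota g z e hz he1 he2]
    have h0 := piQ_iota_span_zero g (PZ z M)
      (bracket_mQ_mem g (PZ z M) (z i) (z j) (e i) (e j)
        (dvd_ei_mul_ej z hz M e he1 he2 hij) x y)
    have h2 : ιC g ⁅mQ g (z i) (e i) x, mQ g (z j) (e j) y⁆ =
        ιC g (mQ g (z i) (e i) x) * ιC g (mQ g (z j) (e j) y) -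
        ιC g (mQ g (z j) (e j) y) * ιC g (mQ g (z i) (e i) x) := by
      rw [LieHom.map_lie]; rfl
    rw [h2, _root_.map_sub, _root_.map_mul, _root_.map_mul, sub_eq_zero] at h0
    exact h0
  have step1 : ∀ u, ∀ y : Cur g,
      Commute (etaQ g z e hz he1 he2 i u) (etaQ g z e hz he1 he2 j (ιC g y)) := by
    refine U_induction g (fun v y => base v y) ?_ ?_ ?_
    · intro c y
      rw [AlgHom.commutes]
      exact Algebra.commutes c _
    · intro a b ha hb y
      rw [_root_.map_add]
      exact (ha y).add_left (hb y)
    · intro a b ha hb y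
      rw [_root_.map_mul]
      exact (ha y).mul_left (hb y)
  intro u
  refine U_induction g ?_ ?_ ?_ ?_
  · intro y
    exact step1 u y
  · intro c
    rw [AlgHom.commutes]
    exact (Algebra.commutes c _).symm
  · intro a b ha hb
    rw [_root_.map_add]
    exact ha.add_right hb
  · intro a b ha hb
    rw [_root_.map_mul]
    exact ha.mul_right hb

end Heart
set_option maxHeartbeats 4000000 in
set_option synthInstance.maxHeartbeats 1000000 in
/- STATEMENT 10: the composition of `Δ_𝒵` with the `N`-fold tensor power of the
projection `U(g[t]) → U(g[t])/B_M` is a surjective algebra homomorphism with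
kernel `B_{M,𝒵}`; hence it induces an algebra isomorphism
`U(g[t])/B_{M,𝒵} ≅ (U(g[t])/B_M)^{⊗N}`.  (Here the quotient `U(g[t])/B_M` is
represented by any surjective algebra homomorphism `p` with kernel `B_M`, and
similarly for `U(g[t])/B_{M,𝒵}`.) -/
theorem statement10 (κ : Type) [Countable κ] (bg : Module.Basis κ ℂ g)
    (N M : ℕ) (hN : 0 < N) (hM : 1 ≤ M)
    (z : Fin N → ℂ) (hz : Function.Injective z)
    (Δz : UC g →ₐ[ℂ] ⨂[ℂ] _ : Fin N, UC g)
    (hΔz : ∀ x : Cur g, Δz (ιC g x) =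
      ∑ i, tprod ℂ (Function.update (fun _ : Fin N => (1 : UC g)) i
        (ιC g (phi g (-(z i)) x))))
    (Q : Type) [Ring Q] [Algebra ℂ Q] (p : UC g →ₐ[ℂ] Q)
    (hpsurj : Function.Surjective p)
    (hpker : {u : UC g | p u = 0} =
      (rIdeal (ιC g '' {w : Cur g | ∃ (q : Polynomial ℂ) (x : g),
        w = (Polynomial.X ^ M * q) ⊗ₜ[ℂ] x}) : Set (UC g)))
    (θ : UC g →ₐ[ℂ] ⨂[ℂ] _ : Fin N, Q)
    (hθ : ∀ u, θ u = PiTensorProduct.map (fun _ : Fin N => p.toLinearMap) (Δz u)) :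
    -- `B_M` is a two-sided ideal
    (∀ a ∈ rIdeal (ιC g '' {w : Cur g | ∃ (q : Polynomial ℂ) (x : g),
        w = (Polynomial.X ^ M * q) ⊗ₜ[ℂ] x}), ∀ u : UC g,
      a * u ∈ rIdeal (ιC g '' {w : Cur g | ∃ (q : Polynomial ℂ) (x : g),
        w = (Polynomial.X ^ M * q) ⊗ₜ[ℂ] x}) ∧
      u * a ∈ rIdeal (ιC g '' {w : Cur g | ∃ (q : Polynomial ℂ) (x : g),
        w = (Polynomial.X ^ M * q) ⊗ₜ[ℂ] x})) ∧
    -- `B_{M,𝒵}` is a two-sided ideal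
    (∀ a ∈ rIdeal (ιC g '' {w : Cur g | ∃ (q : Polynomial ℂ) (x : g),
        w = ((∏ i, (Polynomial.X - Polynomial.C (z i)) ^ M) * q) ⊗ₜ[ℂ] x}),
      ∀ u : UC g,
      a * u ∈ rIdeal (ιC g '' {w : Cur g | ∃ (q : Polynomial ℂ) (x : g),
        w = ((∏ i, (Polynomial.X - Polynomial.C (z i)) ^ M) * q) ⊗ₜ[ℂ] x}) ∧
      u * a ∈ rIdeal (ιC g '' {w : Cur g | ∃ (q : Polynomial ℂ) (x : g),
        w = ((∏ i, (Polynomial.X - Polynomial.C (z i)) ^ M) * q) ⊗ₜ[ℂ] x})) ∧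
    -- the composition is surjective with kernel `B_{M,𝒵}`
    Function.Surjective θ ∧
    {u : UC g | θ u = 0} =
      (rIdeal (ιC g '' {w : Cur g | ∃ (q : Polynomial ℂ) (x : g),
        w = ((∏ i, (Polynomial.X - Polynomial.C (z i)) ^ M) * q) ⊗ₜ[ℂ] x}) :
        Set (UC g)) ∧
    -- hence the induced algebra isomorphism `U(g[t])/B_{M,𝒵} ≅ (U(g[t])/B_M)^{⊗N}`
    (∀ (QZ : Type) [Ring QZ] [Algebra ℂ QZ] (pZ : UC g →ₐ[ℂ] QZ),
      Function.Surjective pZ →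
      {u : UC g | pZ u = 0} =
        (rIdeal (ιC g '' {w : Cur g | ∃ (q : Polynomial ℂ) (x : g),
          w = ((∏ i, (Polynomial.X - Polynomial.C (z i)) ^ M) * q) ⊗ₜ[ℂ] x}) :
          Set (UC g)) →
      ∃ e : QZ ≃ₐ[ℂ] ⨂[ℂ] _ : Fin N, Q, ∀ u, e (pZ u) = θ u) := by
  classical
  choose e he1 he2 using fun i => exists_crt z hz M i
  -- basic kernel facts for `p`
  have hp0 : ∀ (f : Polynomial ℂ) (x : g), Polynomial.X ^ M ∣ f →
      p (ιC g (f ⊗ₜ[ℂ] x)) = 0 := by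
    intro f x hf
    exact (Set.ext_iff.mp hpker _).mpr (mem_BI_of_dvd g x hf)
  have hpcongr : ∀ (f f' : Polynomial ℂ) (x : g), Polynomial.X ^ M ∣ (f - f') →
      p (ιC g (f ⊗ₜ[ℂ] x)) = p (ιC g (f' ⊗ₜ[ℂ] x)) := by
    intro f f' x hf
    have h0 := hp0 _ x hf
    rw [TensorProduct.sub_tmul, iC_sub g, _root_.map_sub, sub_eq_zero] at h0
    exact h0
  -- `θ` on generators
  have θι : ∀ (f : Polynomial ℂ) (x : g), θ (ιC g (f ⊗ₜ[ℂ] x)) =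
      ∑ j, tprod ℂ (Function.update (fun _ : Fin N => (1 : Q)) j
        (p (ιC g ((Polynomial.aeval (Polynomial.X + Polynomial.C (z j)) f) ⊗ₜ[ℂ] x)))) := by
    intro f x
    rw [hθ, hΔz, _root_.map_sum]
    refine Finset.sum_congr rfl (fun j _ => ?_)
    rw [PiTensorProduct.map_tprod]
    have harg : (fun k => p.toLinearMap (Function.update (fun _ : Fin N => (1 : UC g)) j
        (ιC g (phi g (-(z j)) (f ⊗ₜ[ℂ] x))) k)) =
        Function.update (fun _ : Fin N => (1 : Q)) j
          (p (ιC g ((Polynomial.aeval (Polynomial.X + Polynomial.C (z j)) f) ⊗ₜ[ℂ] x))) := by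
      funext k
      by_cases hk : k = j
      · subst hk
        rw [Function.update_self, Function.update_self]
        have hphi : phi g (-(z k)) (f ⊗ₜ[ℂ] x) =
            (Polynomial.aeval (Polynomial.X + Polynomial.C (z k)) f) ⊗ₜ[ℂ] x := by
          show (Polynomial.aeval (Polynomial.X - Polynomial.C (-(z k))) f) ⊗ₜ[ℂ] x = _
          rw [map_neg, sub_neg_eq_add]
        rw [hphi]
        rfl
      · rw [Function.update_of_ne hk, Function.update_of_ne hk]
        exact _root_.map_one p
    exact congrArg (⇑(PiTensorProduct.tprod ℂ)) harg
  -- θ of correction elements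
  have key : ∀ (i : Fin N) (v : Cur g), θ (ιC g (mQ g (z i) (e i) v)) =
      tprod ℂ (Function.update (fun _ : Fin N => (1 : Q)) i (p (ιC g v))) := by
    intro i v
    induction v using TensorProduct.induction_on with
    | zero =>
        have hL : θ (ιC g (mQ g (z i) (e i) 0)) = 0 := by
          rw [_root_.map_zero, _root_.map_zero (ιC g), _root_.map_zero]
        have hR : tprod ℂ (Function.update (fun _ : Fin N => (1 : Q)) i (p (ιC g 0))) = 0 := by
          rw [_root_.map_zero (ιC g), _root_.map_zero]
          exact MultilinearMap.map_update_zero _ _ _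
        rw [hL, hR]
    | tmul f x =>
        rw [mQ_tmul, θι]
        rw [Finset.sum_eq_single i ?h0 ?h1]
        case h0 =>
          intro b _ hbi
          have hdvd : Polynomial.X ^ M ∣ Polynomial.aeval (Polynomial.X + Polynomial.C (z b))
              (e i * Polynomial.aeval (Polynomial.X - Polynomial.C (z i)) f) := by
            apply dvd_aeval_shift
            exact Dvd.dvd.mul_right (he1 i b hbi) _
          rw [hp0 _ x hdvd]
          exact MultilinearMap.map_update_zero _ _ _
        case h1 => intro hi; exact absurd (Finset.mem_univ i) hi
        have hdvd : Polynomial.X ^ M ∣ (Polynomial.aeval (Polynomial.X + Polynomial.C (z i))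
            (e i * Polynomial.aeval (Polynomial.X - Polynomial.C (z i)) f) - f) := by
          have h1 : Polynomial.aeval (Polynomial.X + Polynomial.C (z i))
              (e i * Polynomial.aeval (Polynomial.X - Polynomial.C (z i)) f) =
              Polynomial.aeval (Polynomial.X + Polynomial.C (z i)) (e i) * f := by
            rw [_root_.map_mul, aeval_shift_inv]
          have h2 : Polynomial.aeval (Polynomial.X + Polynomial.C (z i))
              (e i * Polynomial.aeval (Polynomial.X - Polynomial.C (z i)) f) - f =
              (Polynomial.aeval (Polynomial.X + Polynomial.C (z i)) (e i) - 1) * f := by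
            rw [h1]; ring
          rw [h2]
          refine Dvd.dvd.mul_right ?_ f
          have h3 := dvd_aeval_shift (he2 i)
          rwa [_root_.map_sub, _root_.map_one] at h3
        rw [hpcongr _ _ x hdvd]
    | add v1 v2 h1 h2 =>
        rw [_root_.map_add, _root_.map_add (ιC g), _root_.map_add, h1, h2,
          _root_.map_add (ιC g), _root_.map_add, MultilinearMap.map_update_add]
  -- surjectivity
  have hrange_single : ∀ (i : Fin N) (u : UC g),
      tprod ℂ (Function.update (fun _ : Fin N => (1 : Q)) i (p u)) ∈ θ.range := by
    intro i
    refine U_induction g ?_ ?_ ?_ ?_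
    · intro v
      exact ⟨ιC g (mQ g (z i) (e i) v), key i v⟩
    · intro c
      have hval : tprod ℂ (Function.update (fun _ : Fin N => (1 : Q)) i
          (p (algebraMap ℂ (UC g) c))) = algebraMap ℂ (⨂[ℂ] _ : Fin N, Q) c := by
        rw [AlgHom.commutes, Algebra.algebraMap_eq_smul_one (A := Q),
          MultilinearMap.map_update_smul, Function.update_eq_self]
        rw [Algebra.algebraMap_eq_smul_one]
        rfl
      rw [hval]
      exact θ.range.algebraMap_mem c
    · intro a b ha hb
      rw [_root_.map_add, MultilinearMap.map_update_add]
      exact add_mem ha hb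
    · intro a b ha hb
      have hfun : Function.update (fun _ : Fin N => (1 : Q)) i (p (a * b)) =
          Function.update (fun _ : Fin N => (1 : Q)) i (p a) *
          Function.update (fun _ : Fin N => (1 : Q)) i (p b) := by
        funext k
        by_cases hk : k = i
        · subst hk; simp [_root_.map_mul]
        · simp [Function.update_of_ne hk]
      rw [hfun, ← PiTensorProduct.tprod_mul_tprod]
      exact mul_mem ha hb
  have hsurj : Function.Surjective θ := by
    intro t
    have : t ∈ θ.range := by
      induction t using PiTensorProduct.induction_on with
      | smul_tprod r a =>
          choose u hu using fun k => hpsurj (a k)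
          have htp : tprod ℂ a ∈ θ.range := by
            have htn := PiTensorProduct.tprod_noncommProd (R := ℂ) Finset.univ
              (fun i => Pi.mulSingle i (a i)) (fun i _ j _ _ => Pi.mulSingle_apply_commute a i j)
            rw [Finset.noncommProd_mulSingle a] at htn
            rw [htn]
            apply Submonoid.noncommProd_mem (θ.range.toSubsemiring.toSubmonoid)
            intro k _
            have hk : Pi.mulSingle k (a k) =
                Function.update (fun _ : Fin N => (1 : Q)) k (p (u k)) := by
              rw [hu]; rfl
            rw [hk]
            exact hrange_single k (u k)
          exact Subalgebra.smul_mem _ htp r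
      | add x y hx hy => exact add_mem hx hy
    exact this
  -- B_{M,Z} ⊆ ker θ
  have hBker : ∀ u ∈ BI g (PZ z M), θ u = 0 := by
    intro u hu
    induction hu using Submodule.span_induction with
    | mem y hy =>
        obtain ⟨-, ⟨w, ⟨q, x, rfl⟩, rfl⟩, v, rfl⟩ := hy
        rw [_root_.map_mul, θι]
        have hzero : ∀ j ∈ (Finset.univ : Finset (Fin N)),
            tprod ℂ (Function.update (fun _ : Fin N => (1 : Q)) j
              (p (ιC g ((Polynomial.aeval (Polynomial.X + Polynomial.C (z j))
                (PZ z M * q)) ⊗ₜ[ℂ] x)))) = 0 := by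
          intro j _
          have hdvd : Polynomial.X ^ M ∣ Polynomial.aeval
              (Polynomial.X + Polynomial.C (z j)) (PZ z M * q) := by
            apply dvd_aeval_shift
            exact Dvd.dvd.mul_right
              (Finset.dvd_prod_of_mem (fun k => (Polynomial.X - Polynomial.C (z k)) ^ M)
                (Finset.mem_univ j)) q
          rw [hp0 _ x hdvd]
          exact MultilinearMap.map_update_zero _ _ _
        rw [Finset.sum_eq_zero hzero, zero_mul]
    | zero => exact _root_.map_zero θ
    | add a b _ _ ha hb => rw [_root_.map_add, ha, hb, add_zero]
    | smul c a _ ha => rw [_root_.map_smul, ha, smul_zero]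
  -- the inverse map Φ
  have hψex : ∀ i : Fin N, ∃ ψi : Q →ₐ[ℂ] (Jcon g (PZ z M)).Quotient,
      ∀ u, ψi (p u) = etaQ g z e hz he1 he2 i u :=
    fun i => factor_through p hpsurj (etaQ g z e hz he1 he2 i)
      (fun u hu => etaQ_BM g z e hz he1 he2 i u ((Set.ext_iff.mp hpker u).mp hu))
  choose ψ hψ using hψex
  have hψcomm : ∀ {i j : Fin N}, i ≠ j → ∀ q1 q2, Commute (ψ i q1) (ψ j q2) := by
    intro i j hij q1 q2
    obtain ⟨u1, rfl⟩ := hpsurj q1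
    obtain ⟨u2, rfl⟩ := hpsurj q2
    rw [hψ, hψ]
    exact etaQ_commute g z e hz he1 he2 hij u1 u2
  have hFone : ((MultilinearMap.mkPiAlgebraFin ℂ N ((Jcon g (PZ z M)).Quotient)).compLinearMap
      (fun i => (ψ i).toLinearMap)) 1 = 1 := by
    show (List.ofFn fun i : Fin N => ψ i 1).prod = 1
    apply List.prod_eq_one
    intro y hy
    rw [List.mem_ofFn] at hy
    obtain ⟨k, rfl⟩ := hy
    exact _root_.map_one (ψ k)
  have hFmul : ∀ x y, ((MultilinearMap.mkPiAlgebraFin ℂ N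
      ((Jcon g (PZ z M)).Quotient)).compLinearMap (fun i => (ψ i).toLinearMap)) (x * y) =
      ((MultilinearMap.mkPiAlgebraFin ℂ N ((Jcon g (PZ z M)).Quotient)).compLinearMap
        (fun i => (ψ i).toLinearMap)) x *
      ((MultilinearMap.mkPiAlgebraFin ℂ N ((Jcon g (PZ z M)).Quotient)).compLinearMap
        (fun i => (ψ i).toLinearMap)) y := by
    intro x y
    show (List.ofFn fun i : Fin N => ψ i ((x * y) i)).prod =
      (List.ofFn fun i : Fin N => ψ i (x i)).prod * (List.ofFn fun i : Fin N => ψ i (y i)).prod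
    have hxy : (fun i : Fin N => ψ i ((x * y) i)) = fun i => ψ i (x i) * ψ i (y i) := by
      funext i
      exact _root_.map_mul (ψ i) (x i) (y i)
    rw [hxy, ofFn_prod_mul _ _ (fun i j hij => hψcomm hij _ _)]
  set Φ : (⨂[ℂ] _ : Fin N, Q) →ₐ[ℂ] (Jcon g (PZ z M)).Quotient :=
    PiTensorProduct.liftAlgHom _ hFone hFmul with hΦdef
  have hΦtprod : ∀ a : Fin N → Q, Φ (tprod ℂ a) = (List.ofFn fun i => ψ i (a i)).prod :=
    fun a => PiTensorProduct.lift.tprod a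
  have hΦθ : ∀ u, Φ (θ u) = piQ g (PZ z M) u := by
    have heq : Φ.comp θ = piQ g (PZ z M) := by
      apply UniversalEnvelopingAlgebra.hom_ext
      apply LieHom.ext
      intro v
      show Φ (θ (ιC g v)) = piQ g (PZ z M) (ιC g v)
      induction v using TensorProduct.induction_on with
      | zero => rw [_root_.map_zero (ιC g), _root_.map_zero, _root_.map_zero, _root_.map_zero]
      | add v1 v2 h1 h2 =>
          rw [_root_.map_add (ιC g), _root_.map_add, _root_.map_add, h1, h2, _root_.map_add]
      | tmul f x =>
          rw [θι, _root_.map_sum]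
          have hterm : ∀ j : Fin N, Φ (tprod ℂ (Function.update (fun _ : Fin N => (1 : Q)) j
              (p (ιC g ((Polynomial.aeval (Polynomial.X + Polynomial.C (z j)) f) ⊗ₜ[ℂ] x))))) =
              piQ g (PZ z M) (ιC g ((e j * f) ⊗ₜ[ℂ] x)) := by
            intro j
            rw [hΦtprod, ofFn_prod_single _ j (fun i hi => by
              rw [Function.update_of_ne hi]
              exact _root_.map_one (ψ i))]
            rw [Function.update_self, hψ, etaQ_iota g z e hz he1 he2, mQ_tmul,
              aeval_shift_inv']
          rw [Finset.sum_congr rfl (fun j _ => hterm j)]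
          have h1 : ((∑ j, e j * f)) ⊗ₜ[ℂ] x = ∑ j, (e j * f) ⊗ₜ[ℂ] x :=
            TensorProduct.sum_tmul _ _ _
          have h3 : ιC g (∑ j, (e j * f) ⊗ₜ[ℂ] x) = ∑ j, ιC g ((e j * f) ⊗ₜ[ℂ] x) :=
            _root_.map_sum (ιC g).toLinearMap _ _
          have hsum : ∑ j, piQ g (PZ z M) (ιC g ((e j * f) ⊗ₜ[ℂ] x)) =
              piQ g (PZ z M) (ιC g ((∑ j, e j * f) ⊗ₜ[ℂ] x)) := by
            rw [h1, h3, _root_.map_sum]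
          rw [hsum]
          have hdvd : PZ z M ∣ ((∑ j, e j * f) - f) := by
            have h2 : (∑ j, e j * f) - f = -((1 - ∑ j, e j) * f) := by
              rw [← Finset.sum_mul]; ring
            rw [h2]
            exact Dvd.dvd.neg_right
              (Dvd.dvd.mul_right (dvd_one_sub_sum z hz M e he1 he2) f)
          have h0 := piQ_iota_zero g (PZ z M) x hdvd
          rw [TensorProduct.sub_tmul, iC_sub g, _root_.map_sub, sub_eq_zero] at h0
          exact h0
    exact fun u => AlgHom.congr_fun heq u
  -- kernel equality
  have hker : {u : UC g | θ u = 0} = (BI g (PZ z M) : Set (UC g)) := by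
    ext u
    constructor
    · intro hu
      have hpi : piQ g (PZ z M) u = 0 := by
        rw [← hΦθ u]
        show Φ (θ u) = 0
        rw [hu, _root_.map_zero]
      exact span_le_BI g (PZ z M) u ((piQ_eq_zero_iff g (PZ z M) u).mp hpi)
    · intro hu
      exact hBker u hu
  refine ⟨?_, ?_, hsurj, hker, ?_⟩
  · intro a ha u
    exact ⟨BI_mul_right g ha u, BI_mul_left g u a ha⟩
  · intro a ha u
    exact ⟨BI_mul_right g ha u, BI_mul_left g u a ha⟩
  · intro QZ _ _ pZ hZsurj hZker
    have hZθ : ∀ u : UC g, pZ u = 0 ↔ θ u = 0 :=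
      fun u => (Set.ext_iff.mp hZker u).trans (Set.ext_iff.mp hker u).symm
    obtain ⟨e1, hee1⟩ := factor_through pZ hZsurj θ (fun u hu => (hZθ u).mp hu)
    obtain ⟨e2, hee2⟩ := factor_through θ hsurj pZ (fun u hu => (hZθ u).mpr hu)
    refine ⟨AlgEquiv.ofAlgHom e1 e2 ?_ ?_, ?_⟩
    · apply AlgHom.ext
      intro t
      obtain ⟨u, rfl⟩ := hsurj t
      rw [AlgHom.comp_apply, hee2, hee1]
      rfl
    · apply AlgHom.ext
      intro t
      obtain ⟨u, rfl⟩ := hZsurj t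
      rw [AlgHom.comp_apply, hee1, hee2]
      rfl
    · intro u
      exact hee1 u
end
end

section
/- Let g be a complex Lie algebra with a countable basis, let z₁, …, z_N be pairwise distinct complex numbers, and let L ≥ 1. Let X₁, …, X_N be right ideals of U(g[t]) with X_i ⊇ B_L for every i, where B_L = (g ⊗ t^L ℂ[t]) U(g[t]). Then I^{(N)}(X₁, …, X_N) = Δ_𝒵(X₁ ⊛ ⋯ ⊛ X_N(𝒵)) + I^{(N)}(B_L, …, B_L); in particular, for every a ∈ I^{(N)}(X₁, …, X_N) there exists x ∈ X₁ ⊛ ⋯ ⊛ X_N(𝒵) with a − Δ_𝒵(x) ∈ I^{(N)}(B_L, …, B_L). -/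
open scoped TensorProduct
open UniversalEnvelopingAlgebra Polynomial PiTensorProduct

noncomputable section

variable (g : Type) [LieRing g] [LieAlgebra ℂ g]

attribute [local instance 100] LieRing.ofAssociativeRing

-- ## auxiliary lemmas

/-- Induction principle for the universal enveloping algebra. -/
theorem UC_induction {P : UC g → Prop}
    (halg : ∀ c : ℂ, P (algebraMap ℂ (UC g) c))
    (hι : ∀ x : Cur g, P (ιC g x))
    (hmul : ∀ a b, P a → P b → P (a * b))
    (hadd : ∀ a b, P a → P b → P (a + b)) (u : UC g) : P u := by
  obtain ⟨a, rfl⟩ : ∃ a, UniversalEnvelopingAlgebra.mkAlgHom ℂ (Cur g) a = u :=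
    RingCon.mkₐ_surjective (α := ℂ) _ u
  induction a using TensorAlgebra.induction with
  | algebraMap c => rw [AlgHom.commutes]; exact halg c
  | ι x => exact hι x
  | mul a b ha hb => rw [_root_.map_mul]; exact hmul _ _ ha hb
  | add a b ha hb => rw [_root_.map_add]; exact hadd _ _ ha hb

theorem mem_rIdeal {U : Type} [Ring U] [Algebra ℂ U] {s : Set U} {x : U} (hx : x ∈ s) :
    x ∈ rIdeal s :=
  Submodule.subset_span ⟨x, hx, 1, (mul_one x).symm⟩

theorem rIdeal_mul {U : Type} [Ring U] [Algebra ℂ U] {s : Set U} {a : U}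
    (ha : a ∈ rIdeal s) (u : U) : a * u ∈ rIdeal s := by
  induction ha using Submodule.span_induction with
  | mem y hy =>
    obtain ⟨x, hx, v, rfl⟩ := hy
    exact Submodule.subset_span ⟨x, hx, v * u, mul_assoc _ _ _⟩
  | zero => simp only [zero_mul]; exact (rIdeal s).zero_mem
  | add x y _ _ hx hy => rw [add_mul]; exact (rIdeal s).add_mem hx hy
  | smul c x _ hx => rw [smul_mul_assoc]; exact (rIdeal s).smul_mem c hx

def TLset (L : ℕ) : Set (Cur g) :=
  {w : Cur g | ∃ (p : Polynomial ℂ) (x : g), w = (Polynomial.X ^ L * p) ⊗ₜ[ℂ] x}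

def TL (L : ℕ) : Submodule ℂ (Cur g) := Submodule.span ℂ (TLset g L)

theorem ι_TL_mem {L : ℕ} {w : Cur g} (hw : w ∈ TL g L) :
    ιC g w ∈ rIdeal (ιC g '' TLset g L) := by
  induction hw using Submodule.span_induction with
  | mem y hy => exact mem_rIdeal ⟨y, hy, rfl⟩
  | zero => rw [map_zero (ιC g)]; exact Submodule.zero_mem _
  | add x y _ _ hx hy => rw [map_add (ιC g)]; exact Submodule.add_mem _ hx hy
  | smul c x _ hx => rw [map_smul (ιC g)]; exact Submodule.smul_mem _ _ hx

theorem lie_mem_TL {L : ℕ} (ξ : Cur g) {w : Cur g} (hw : w ∈ TL g L) :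
    ⁅ξ, w⁆ ∈ TL g L := by
  induction hw using Submodule.span_induction with
  | mem y hy =>
    obtain ⟨p, x, rfl⟩ := hy
    induction ξ using TensorProduct.induction_on with
    | zero => have h := zero_lie (L := Cur g) ((Polynomial.X ^ L * p) ⊗ₜ[ℂ] x : Cur g); rw [h]
              exact (TL g L).zero_mem
    | tmul q v =>
      have h := LieAlgebra.ExtendScalars.bracket_tmul ℂ (Polynomial ℂ) g g q
        (Polynomial.X ^ L * p) v x
      rw [h]
      exact Submodule.subset_span ⟨q * p, ⁅v, x⁆,
        by rw [show q * (Polynomial.X ^ L * p) = Polynomial.X ^ L * (q * p) by ring]⟩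
    | add a b ha hb =>
      have h := add_lie a b ((Polynomial.X ^ L * p) ⊗ₜ[ℂ] x : Cur g); rw [h]
      exact Submodule.add_mem _ ha hb
  | zero =>
    have h := lie_zero ξ (M := Cur g); rw [h]; exact (TL g L).zero_mem
  | add x y _ _ hx hy =>
    have h := lie_add ξ x y; rw [h]; exact Submodule.add_mem _ hx hy
  | smul c x _ hx =>
    have h := lie_smul c ξ x; rw [h]; exact Submodule.smul_mem _ _ hx

theorem BL_left_mul {L : ℕ} (u : UC g) :
    ∀ b ∈ rIdeal (ιC g '' TLset g L), u * b ∈ rIdeal (ιC g '' TLset g L) := by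
  induction u using UC_induction with
  | halg c =>
    intro b hb
    rw [← Algebra.smul_def]
    exact Submodule.smul_mem _ _ hb
  | hι ξ =>
    intro b hb
    induction hb using Submodule.span_induction with
    | mem y hy =>
      obtain ⟨a', ⟨w, hw, rfl⟩, v, rfl⟩ := hy
      have key : ιC g ξ * ιC g w = ιC g w * ιC g ξ + ιC g ⁅ξ, w⁆ := by
        have h := (ιC g).map_lie (x := ξ) (y := w)
        rw [Ring.lie_def] at h
        rw [h]; noncomm_ring
      rw [← mul_assoc, key, add_mul, mul_assoc]
      exact Submodule.add_mem _
        (rIdeal_mul (mem_rIdeal (s := ιC g '' TLset g L) ⟨w, hw, rfl⟩) _)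
        (rIdeal_mul (ι_TL_mem g (lie_mem_TL g ξ (Submodule.subset_span hw))) v)
    | zero => rw [mul_zero]; exact Submodule.zero_mem _
    | add x y _ _ hx hy => rw [mul_add]; exact Submodule.add_mem _ hx hy
    | smul c x _ hx => rw [mul_smul_comm]; exact Submodule.smul_mem _ _ hx
  | hmul a b ha hb =>
    intro m hm
    rw [mul_assoc]
    exact ha _ (hb _ hm)
  | hadd a b ha hb =>
    intro m hm
    rw [add_mul]
    exact Submodule.add_mem _ (ha _ hm) (hb _ hm)

def slotLM {N : ℕ} (i : Fin N) : UC g →ₗ[ℂ] ⨂[ℂ] _ : Fin N, UC g where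
  toFun u := tprod ℂ (Function.update (fun _ => (1 : UC g)) i u)
  map_add' u v := by simp [MultilinearMap.map_update_add]
  map_smul' c u := by simp [MultilinearMap.map_update_smul]

theorem slotLM_mem {N : ℕ} (i : Fin N) (X : Set (UC g)) {u : UC g} (hu : u ∈ X) :
    slotLM g i u ∈ slotSub i X :=
  Submodule.subset_span ⟨Function.update (fun _ => (1 : UC g)) i u, by simpa using hu, rfl⟩

theorem slotSub_le_ITen {N : ℕ} (i : Fin N) (X : Fin N → Set (UC g)) :
    slotSub i (X i) ≤ ITen X := le_iSup (fun j => slotSub j (X j)) i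

theorem ITen_mono {N : ℕ} {X Y : Fin N → Set (UC g)} (h : ∀ i, X i ⊆ Y i) :
    ITen X ≤ ITen Y :=
  iSup_mono fun i => Submodule.span_mono fun t ⟨a, ha, ht⟩ => ⟨a, h i ha, ht⟩

theorem ITenB_mul {N L : ℕ}
    {m : ⨂[ℂ] _ : Fin N, UC g}
    (hm : m ∈ ITen (fun _ : Fin N => (rIdeal (ιC g '' TLset g L) : Set (UC g)))) :
    ∀ y, m * y ∈ ITen (fun _ : Fin N => (rIdeal (ιC g '' TLset g L) : Set (UC g))) ∧
      y * m ∈ ITen (fun _ : Fin N => (rIdeal (ιC g '' TLset g L) : Set (UC g))) := by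
  set B := rIdeal (ιC g '' TLset g L) with hB
  set J := ITen (fun _ : Fin N => (B : Set (UC g))) with hJ
  refine Submodule.iSup_induction (motive := fun m => ∀ y, m * y ∈ J ∧ y * m ∈ J) _ hm ?_ ?_ ?_
  · intro i m hmi
    induction hmi using Submodule.span_induction with
    | mem t ht =>
      obtain ⟨a, hai, rfl⟩ := ht
      intro y
      induction y using PiTensorProduct.induction_on with
      | smul_tprod r f =>
        constructor
        · rw [mul_smul_comm, tprod_mul_tprod]
          refine Submodule.smul_mem _ _ (slotSub_le_ITen g i _ (Submodule.subset_span ?_))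
          exact ⟨a * f, by simpa using rIdeal_mul hai (f i), rfl⟩
        · rw [smul_mul_assoc, tprod_mul_tprod]
          refine Submodule.smul_mem _ _ (slotSub_le_ITen g i _ (Submodule.subset_span ?_))
          exact ⟨f * a, by simpa using BL_left_mul g (f i) _ hai, rfl⟩
      | add x y hx hy =>
        exact ⟨by rw [mul_add]; exact Submodule.add_mem _ hx.1 hy.1,
          by rw [add_mul]; exact Submodule.add_mem _ hx.2 hy.2⟩
    | zero => intro y; simp only [zero_mul, mul_zero]; exact ⟨Submodule.zero_mem _, Submodule.zero_mem _⟩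
    | add x y _ _ hx hy =>
      intro u
      exact ⟨by rw [add_mul]; exact Submodule.add_mem _ (hx u).1 (hy u).1,
        by rw [mul_add]; exact Submodule.add_mem _ (hx u).2 (hy u).2⟩
    | smul c x _ hx =>
      intro u
      exact ⟨by rw [smul_mul_assoc]; exact Submodule.smul_mem _ _ (hx u).1,
        by rw [mul_smul_comm]; exact Submodule.smul_mem _ _ (hx u).2⟩
  · intro y
    simp only [zero_mul, mul_zero]
    exact ⟨Submodule.zero_mem _, Submodule.zero_mem _⟩
  · intro x y hx hy u
    exact ⟨by rw [add_mul]; exact Submodule.add_mem _ (hx u).1 (hy u).1,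
      by rw [mul_add]; exact Submodule.add_mem _ (hx u).2 (hy u).2⟩

theorem poly_crt {N : ℕ} (L : ℕ) (z : Fin N → ℂ) (hz : Function.Injective z)
    (i : Fin N) (p : Polynomial ℂ) :
    ∃ q : Polynomial ℂ, ∀ j, ∃ h : Polynomial ℂ,
      Polynomial.aeval (Polynomial.X + Polynomial.C (z j)) q -
        (if j = i then p else 0) = Polynomial.X ^ L * h := by
  classical
  set m : Polynomial ℂ :=
    ∏ j ∈ Finset.univ.erase i, (Polynomial.X - Polynomial.C (z j)) ^ L with hm
  have cop : IsCoprime ((Polynomial.X - Polynomial.C (z i)) ^ L) m := by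
    refine IsCoprime.prod_right fun j hj => ?_
    exact (Polynomial.pairwise_coprime_X_sub_C hz
      (Finset.ne_of_mem_erase hj).symm).pow
  obtain ⟨a, b, hab⟩ := cop
  set c : Polynomial ℂ := Polynomial.aeval (Polynomial.X - Polynomial.C (z i)) p with hc
  have h1 : ∀ j : Fin N, Polynomial.aeval (Polynomial.X + Polynomial.C (z j))
      (Polynomial.X - Polynomial.C (z j)) = (Polynomial.X : Polynomial ℂ) := by
    intro j
    rw [map_sub, Polynomial.aeval_X, Polynomial.aeval_C, Polynomial.algebraMap_eq]
    ring
  refine ⟨c * (b * m), fun j => ?_⟩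
  by_cases hji : j = i
  · subst hji
    rw [if_pos rfl]
    have hq : c * (b * m) = c - c * a * (Polynomial.X - Polynomial.C (z j)) ^ L := by
      linear_combination c * hab
    have h2 : Polynomial.aeval (Polynomial.X + Polynomial.C (z j)) c = p := by
      have h3 := Polynomial.aeval_algHom_apply
        (Polynomial.aeval (Polynomial.X + Polynomial.C (z j)) : Polynomial ℂ →ₐ[ℂ] Polynomial ℂ)
        (Polynomial.X - Polynomial.C (z j)) p
      rw [h1 j, Polynomial.aeval_X_left_apply] at h3
      exact h3.symm
    refine ⟨-(Polynomial.aeval (Polynomial.X + Polynomial.C (z j)) (c * a)), ?_⟩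
    rw [hq, map_sub, _root_.map_mul, map_pow, h1 j, h2]
    have h4 : Polynomial.aeval (Polynomial.X + Polynomial.C (z j)) (c * a) =
        Polynomial.aeval (Polynomial.X + Polynomial.C (z j)) c *
        Polynomial.aeval (Polynomial.X + Polynomial.C (z j)) a := _root_.map_mul _ _ _
    ring
  · rw [if_neg hji, sub_zero]
    have hjmem : j ∈ Finset.univ.erase i := Finset.mem_erase.mpr ⟨hji, Finset.mem_univ j⟩
    set m' : Polynomial ℂ :=
      ∏ k ∈ (Finset.univ.erase i).erase j, (Polynomial.X - Polynomial.C (z k)) ^ L with hm'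
    have hjm : m = (Polynomial.X - Polynomial.C (z j)) ^ L * m' :=
      (Finset.mul_prod_erase _ _ hjmem).symm
    refine ⟨Polynomial.aeval (Polynomial.X + Polynomial.C (z j)) (c * (b * m')), ?_⟩
    rw [show c * (b * m) = (Polynomial.X - Polynomial.C (z j)) ^ L * (c * (b * m')) from by
      rw [hjm]; ring]
    rw [_root_.map_mul, map_pow, h1 j]

theorem crt_step {N : ℕ} (L : ℕ) (z : Fin N → ℂ) (hz : Function.Injective z)
    (i : Fin N) (ξ : Cur g) :
    ∃ x : Cur g, ∀ j, phi g (-(z j)) x - (if j = i then ξ else 0) ∈ TL g L := by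
  induction ξ using TensorProduct.induction_on with
  | zero =>
    refine ⟨0, fun j => ?_⟩
    rw [map_zero, ite_self, sub_zero]
    exact (TL g L).zero_mem
  | tmul p y =>
    obtain ⟨q, hq⟩ := poly_crt L z hz i p
    refine ⟨q ⊗ₜ[ℂ] y, fun j => ?_⟩
    obtain ⟨h, hh⟩ := hq j
    have hphi : phi g (-(z j)) (q ⊗ₜ[ℂ] y) =
        (Polynomial.aeval (Polynomial.X + Polynomial.C (z j)) q) ⊗ₜ[ℂ] y := by
      simp only [phi, LinearMap.rTensor_tmul, AlgHom.toLinearMap_apply, map_neg, sub_neg_eq_add]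
    rw [hphi, show (if j = i then p ⊗ₜ[ℂ] y else (0 : Cur g)) =
        (if j = i then p else 0) ⊗ₜ[ℂ] y from by split <;> simp,
      ← TensorProduct.sub_tmul, hh]
    exact Submodule.subset_span ⟨h, y, rfl⟩
  | add ξ₁ ξ₂ h₁ h₂ =>
    obtain ⟨x₁, hx₁⟩ := h₁
    obtain ⟨x₂, hx₂⟩ := h₂
    refine ⟨x₁ + x₂, fun j => ?_⟩
    have hmem := Submodule.add_mem _ (hx₁ j) (hx₂ j)
    have heq : phi g (-(z j)) x₁ - (if j = i then ξ₁ else 0) +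
        (phi g (-(z j)) x₂ - (if j = i then ξ₂ else 0)) =
        phi g (-(z j)) (x₁ + x₂) - (if j = i then ξ₁ + ξ₂ else 0) := by
      rw [map_add]
      split <;> abel
    rwa [heq] at hmem

theorem slotLM_mul {N : ℕ} (i : Fin N) (u v : UC g) :
    slotLM g i (u * v) = slotLM g i u * slotLM g i v := by
  show PiTensorProduct.tprod ℂ _ = PiTensorProduct.tprod ℂ _ * PiTensorProduct.tprod ℂ _
  rw [tprod_mul_tprod]
  congr 1
  funext j
  by_cases hji : j = i
  · subst hji; simp
  · simp [Function.update_of_ne hji]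

set_option maxHeartbeats 1000000 in
theorem good_all {N L : ℕ}
    (z : Fin N → ℂ) (hz : Function.Injective z)
    (Δz : UC g →ₐ[ℂ] ⨂[ℂ] _ : Fin N, UC g)
    (hΔz : ∀ x : Cur g, Δz (ιC g x) =
      ∑ i, tprod ℂ (Function.update (fun _ : Fin N => (1 : UC g)) i
        (ιC g (phi g (-(z i)) x))))
    (a : ⨂[ℂ] _ : Fin N, UC g) :
    ∃ x : UC g, a - Δz x ∈
      ITen (fun _ : Fin N => (rIdeal (ιC g '' TLset g L) : Set (UC g))) := by
  classical
  set J := ITen (fun _ : Fin N => (rIdeal (ιC g '' TLset g L) : Set (UC g))) with hJ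
  have hGone : ∃ x : UC g, (1 : ⨂[ℂ] _ : Fin N, UC g) - Δz x ∈ J :=
    ⟨1, by rw [_root_.map_one, sub_self]; exact J.zero_mem⟩
  have hGadd : ∀ {a b : ⨂[ℂ] _ : Fin N, UC g},
      (∃ x, a - Δz x ∈ J) → (∃ x, b - Δz x ∈ J) → ∃ x, a + b - Δz x ∈ J := by
    rintro a b ⟨x, hx⟩ ⟨y, hy⟩
    refine ⟨x + y, ?_⟩
    rw [map_add]
    have : a + b - (Δz x + Δz y) = a - Δz x + (b - Δz y) := by abel
    rw [this]
    exact J.add_mem hx hy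
  have hGsmul : ∀ (c : ℂ) {a : ⨂[ℂ] _ : Fin N, UC g},
      (∃ x, a - Δz x ∈ J) → ∃ x, c • a - Δz x ∈ J := by
    rintro c a ⟨x, hx⟩
    refine ⟨c • x, ?_⟩
    rw [map_smul, ← smul_sub]
    exact J.smul_mem c hx
  have hGmul : ∀ {a b : ⨂[ℂ] _ : Fin N, UC g},
      (∃ x, a - Δz x ∈ J) → (∃ x, b - Δz x ∈ J) → ∃ x, a * b - Δz x ∈ J := by
    rintro a b ⟨x, hx⟩ ⟨y, hy⟩
    refine ⟨x * y, ?_⟩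
    rw [_root_.map_mul]
    have : a * b - Δz x * Δz y = (a - Δz x) * b + Δz x * (b - Δz y) := by
      noncomm_ring
    rw [this]
    exact J.add_mem ((ITenB_mul g hx b).1) ((ITenB_mul g hy (Δz x)).2)
  have hGslot : ∀ (i : Fin N) (u : UC g), ∃ x, slotLM g i u - Δz x ∈ J := by
    intro i u
    induction u using UC_induction with
    | halg c =>
      have h1 : slotLM g i (algebraMap ℂ (UC g) c) = c • slotLM g i 1 := by
        rw [Algebra.algebraMap_eq_smul_one, map_smul]
      rw [h1]
      refine hGsmul c ?_
      have h2 : slotLM g i (1 : UC g) = 1 := by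
        have : Function.update (fun _ : Fin N => (1 : UC g)) i 1 =
            fun _ : Fin N => (1 : UC g) := by
          funext j
          by_cases hji : j = i
          · subst hji; rw [Function.update_self]
          · rw [Function.update_of_ne hji]
        show tprod ℂ (Function.update (fun _ : Fin N => (1 : UC g)) i 1) = 1
        rw [this]
        rfl
      rw [h2]
      exact hGone
    | hι ξ =>
      obtain ⟨x, hx⟩ := crt_step g L z hz i ξ
      refine ⟨ιC g x, ?_⟩
      rw [hΔz x]
      have key : ∀ j : Fin N,
          tprod ℂ (Function.update (fun _ : Fin N => (1 : UC g)) j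
            (ιC g (phi g (-(z j)) x))) =
          slotLM g j (ιC g (phi g (-(z j)) x - (if j = i then ξ else 0))) +
            (if j = i then slotLM g i (ιC g ξ) else 0) := by
        intro j
        by_cases hji : j = i
        · subst hji
          rw [if_pos rfl, if_pos rfl, map_sub (ιC g), map_sub, sub_add_cancel]
          rfl
        · rw [if_neg hji, if_neg hji, sub_zero, add_zero]
          rfl
      rw [Finset.sum_congr rfl fun j _ => key j, Finset.sum_add_distrib,
        Finset.sum_ite_eq' Finset.univ i fun _ => slotLM g i (ιC g ξ),
        if_pos (Finset.mem_univ i)]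
      have heq : slotLM g i (ιC g ξ) -
          ((∑ j, slotLM g j (ιC g (phi g (-(z j)) x - (if j = i then ξ else 0)))) +
            slotLM g i (ιC g ξ)) =
          -∑ j, slotLM g j (ιC g (phi g (-(z j)) x - (if j = i then ξ else 0))) := by
        abel
      rw [heq]
      refine J.neg_mem (Submodule.sum_mem _ fun j _ => ?_)
      exact slotSub_le_ITen g j (fun _ => (rIdeal (ιC g '' TLset g L) : Set (UC g)))
        (slotLM_mem g j _ (ι_TL_mem g (hx j)))
    | hmul a b ha hb =>
      rw [slotLM_mul]
      exact hGmul ha hb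
    | hadd a b ha hb =>
      rw [map_add]
      exact hGadd ha hb
  have hGtprod : ∀ (s : Finset (Fin N)) (f : Fin N → UC g),
      ∃ x, tprod ℂ (fun j => if j ∈ s then f j else 1) - Δz x ∈ J := by
    intro s
    induction s using Finset.induction_on with
    | empty =>
      intro f
      simp only [Finset.notMem_empty, if_false]
      exact hGone
    | @insert i s hi ih =>
      intro f
      have heq : (fun j => if j ∈ insert i s then f j else 1) =
          (Function.update (fun _ : Fin N => (1 : UC g)) i (f i)) *
            (fun j => if j ∈ s then f j else 1) := by
        funext j
        by_cases hji : j = i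
        · subst hji; simp [hi]
        · simp [Function.update_of_ne hji, Finset.mem_insert, hji]
      have h2 : tprod ℂ (fun j => if j ∈ insert i s then f j else 1) =
          slotLM g i (f i) * tprod ℂ (fun j => if j ∈ s then f j else 1) := by
        rw [heq, ← tprod_mul_tprod]
        rfl
      rw [h2]
      exact hGmul (hGslot i (f i)) (ih f)
  induction a using PiTensorProduct.induction_on with
  | smul_tprod r f =>
    refine hGsmul r ?_
    have hf : (fun j => if j ∈ (Finset.univ : Finset (Fin N)) then f j else 1) = f := by
      funext j; simp
    have := hGtprod Finset.univ f
    rwa [hf] at this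
  | add x y hx hy => exact hGadd hx hy

/- STATEMENT 11: if `X₁, …, X_N` are right ideals of `U(g[t])` containing
`B_L = (g ⊗ t^L ℂ[t])U(g[t])`, then
`I^{(N)}(X₁,…,X_N) = Δ_𝒵(X₁ ⊛ ⋯ ⊛ X_N(𝒵)) + I^{(N)}(B_L,…,B_L)`; i.e. every
`a ∈ I^{(N)}(X₁,…,X_N)` is of the form `Δ_𝒵(x) + b` with `x` in the fusion right
ideal and `b ∈ I^{(N)}(B_L,…,B_L)`. -/
set_option maxHeartbeats 1000000 in
theorem statement11 (κ : Type) [Countable κ] (bg : Module.Basis κ ℂ g)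
    (N L : ℕ) (hN : 0 < N) (hL : 1 ≤ L)
    (z : Fin N → ℂ) (hz : Function.Injective z)
    (Δz : UC g →ₐ[ℂ] ⨂[ℂ] _ : Fin N, UC g)
    (hΔz : ∀ x : Cur g, Δz (ιC g x) =
      ∑ i, tprod ℂ (Function.update (fun _ : Fin N => (1 : UC g)) i
        (ιC g (phi g (-(z i)) x))))
    (Xi : Fin N → Submodule ℂ (UC g))
    (hXr : ∀ i, ∀ a ∈ Xi i, ∀ u : UC g, a * u ∈ Xi i)
    (hXB : ∀ i, rIdeal (ιC g '' {w : Cur g | ∃ (p : Polynomial ℂ) (x : g),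
      w = (Polynomial.X ^ L * p) ⊗ₜ[ℂ] x}) ≤ Xi i) :
    ((ITen fun i => (Xi i : Set (UC g))) : Set (⨂[ℂ] _ : Fin N, UC g)) =
      {a : ⨂[ℂ] _ : Fin N, UC g |
        ∃ x ∈ Δz ⁻¹' (ITen fun i => (Xi i : Set (UC g))),
          a - Δz x ∈ ITen fun _ : Fin N =>
            (rIdeal (ιC g '' {w : Cur g | ∃ (p : Polynomial ℂ) (x : g),
              w = (Polynomial.X ^ L * p) ⊗ₜ[ℂ] x}) : Set (UC g))} := by
  have hBle : ITen (fun _ : Fin N => (rIdeal (ιC g '' TLset g L) : Set (UC g))) ≤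
      ITen fun i => (Xi i : Set (UC g)) :=
    ITen_mono g fun i => hXB i
  ext a
  simp only [Set.mem_setOf_eq, SetLike.mem_coe, Set.mem_preimage]
  constructor
  · intro ha
    obtain ⟨x, hx⟩ := good_all g (L := L) z hz Δz hΔz a
    refine ⟨x, ?_, hx⟩
    show Δz x ∈ ITen fun i => (Xi i : Set (UC g))
    have h2 : Δz x = a - (a - Δz x) := by abel
    rw [h2]
    exact Submodule.sub_mem _ ha (hBle hx)
  · rintro ⟨x, hx1, hx2⟩
    have h1 : Δz x ∈ ITen fun i => (Xi i : Set (UC g)) := hx1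
    have h2 : a = Δz x + (a - Δz x) := by abel
    rw [h2]
    exact Submodule.add_mem _ h1 (hBle hx2)
end
end

section
/- Let g be a finite-dimensional complex Lie algebra, let z₁, …, z_N be pairwise distinct complex numbers, and for each i let V_i be a finite-dimensional g-module with cyclic vector v_i, i.e. U(g)·v_i = V_i. Endow V₁ ⊗ ⋯ ⊗ V_N with the g[t]-module structure in which x ⊗ p(t) ∈ g[t] acts as ∑_{i=1}^N p(z_i) · (1 ⊗ ⋯ ⊗ x|_{V_i} ⊗ ⋯ ⊗ 1) (the operator x acting in the i-th factor). Then v₁ ⊗ ⋯ ⊗ v_N is a cyclic vector for this action: U(g[t]) · (v₁ ⊗ ⋯ ⊗ v_N) = V₁ ⊗ ⋯ ⊗ V_N. -/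
/- STATEMENT 12: for pairwise distinct `z₁, …, z_N` and finite-dimensional cyclic
g-modules `(Vᵢ, vᵢ)`, the vector `v₁ ⊗ ⋯ ⊗ v_N` is cyclic for the `g[t]`-action
on `V₁ ⊗ ⋯ ⊗ V_N` in which `x ⊗ p(t)` acts as `∑ᵢ p(zᵢ)·(x in slot i)`:
the only subspace containing `v₁ ⊗ ⋯ ⊗ v_N` stable under all these operators
is the whole space. -/

open scoped TensorProduct
open PiTensorProduct

theorem statement12 (g : Type) [LieRing g] [LieAlgebra ℂ g]
    [FiniteDimensional ℂ g]
    (N : ℕ) (z : Fin N → ℂ) (hz : Function.Injective z)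
    (V : Fin N → Type) [∀ i, AddCommGroup (V i)] [∀ i, Module ℂ (V i)]
    [∀ i, LieRingModule g (V i)] [∀ i, LieModule ℂ g (V i)]
    [∀ i, FiniteDimensional ℂ (V i)]
    (v : ∀ i, V i)
    (hcyc : ∀ i, LieSubmodule.lieSpan ℂ g {v i} = ⊤)
    (W : Submodule ℂ (⨂[ℂ] i, V i))
    (hvW : tprod ℂ v ∈ W)
    (hWstable : ∀ (x : g) (p : Polynomial ℂ), ∀ w ∈ W,
      (∑ i, Polynomial.eval (z i) p •
        PiTensorProduct.map (Function.update
          (fun j => (LinearMap.id : V j →ₗ[ℂ] V j)) i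
          (LieModule.toEnd ℂ g (V i) x)) w) ∈ W) :
    W = ⊤ := by
  -- Step 1: W is stable under x acting in a single slot i.
  have hslot : ∀ (x : g) (i : Fin N), ∀ w ∈ W,
      PiTensorProduct.map (Function.update
          (fun j => (LinearMap.id : V j →ₗ[ℂ] V j)) i
          (LieModule.toEnd ℂ g (V i) x)) w ∈ W := by
    intro x i w hw
    have h := hWstable x (Lagrange.basis Finset.univ z i) w hw
    have hsum : (∑ j, Polynomial.eval (z j) (Lagrange.basis Finset.univ z i) •
        PiTensorProduct.map (Function.update
          (fun k => (LinearMap.id : V k →ₗ[ℂ] V k)) j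
          (LieModule.toEnd ℂ g (V j) x)) w)
        = PiTensorProduct.map (Function.update
          (fun k => (LinearMap.id : V k →ₗ[ℂ] V k)) i
          (LieModule.toEnd ℂ g (V i) x)) w := by
      rw [Finset.sum_eq_single i]
      · rw [Lagrange.eval_basis_self (hz.injOn) (Finset.mem_univ i), one_smul]
      · intro j _ hji
        rw [Lagrange.eval_basis_of_ne (Ne.symm hji) (Finset.mem_univ j), zero_smul]
      · intro h; exact absurd (Finset.mem_univ i) h
    rwa [hsum] at h
  -- Step 2: for any u, the set of w ∈ V i with tprod (update u i w) ∈ W is a Lie submodule.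
  have key : ∀ (i : Fin N) (u : ∀ j, V j), tprod ℂ (Function.update u i (v i)) ∈ W →
      ∀ w : V i, tprod ℂ (Function.update u i w) ∈ W := by
    intro i u hu w
    let L : V i →ₗ[ℂ] (⨂[ℂ] j, V j) :=
      ((tprod ℂ : MultilinearMap ℂ V (⨂[ℂ] j, V j)).toLinearMap u i)
    have hL : ∀ w : V i, L w = tprod ℂ (Function.update u i w) := fun w => by
      simp [L, MultilinearMap.toLinearMap]
    let S : LieSubmodule ℂ g (V i) :=
      { carrier := (W.comap L : Set (V i))
        add_mem' := fun ha hb => by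
          simpa using Submodule.add_mem (W.comap L) ha hb
        zero_mem' := by simp
        smul_mem' := fun c a ha => by
          simpa using Submodule.smul_mem (W.comap L) c ha
        lie_mem := by
          intro x m hm
          have hm' : L m ∈ W := hm
          have := hslot x i (L m) hm'
          have heq : PiTensorProduct.map (Function.update
              (fun k => (LinearMap.id : V k →ₗ[ℂ] V k)) i
              (LieModule.toEnd ℂ g (V i) x)) (L m) = L ⁅x, m⁆ := by
            rw [hL, hL, PiTensorProduct.map_tprod]
            congr 1
            funext j
            by_cases hji : j = i
            · subst hji; simp
            · simp [Function.update_of_ne hji]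
          rw [heq] at this
          exact this }
    have hvS : v i ∈ S := by
      show L (v i) ∈ W
      rw [hL]; exact hu
    have : (⊤ : LieSubmodule ℂ g (V i)) ≤ S := by
      rw [← hcyc i]
      exact LieSubmodule.lieSpan_le.mpr (by simpa using hvS)
    have hwS : w ∈ S := this trivial
    rw [← hL]; exact hwS
  -- Step 3: induction over slots to show tprod u ∈ W for all u.
  have hall : ∀ (k : ℕ) (hk : k ≤ N) (u : ∀ j, V j),
      (∀ j : Fin N, k ≤ (j : ℕ) → u j = v j) → tprod ℂ u ∈ W := by
    intro k
    induction k with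
    | zero =>
      intro _ u hu
      have : u = v := funext fun j => hu j (Nat.zero_le _)
      rwa [this]
    | succ k ih =>
      intro hk u hu
      have hkN : k < N := hk
      set i : Fin N := ⟨k, hkN⟩
      have h1 : tprod ℂ (Function.update u i (v i)) ∈ W := by
        apply ih (le_of_lt hkN)
        intro j hj
        by_cases hji : j = i
        · subst hji; simp
        · rw [Function.update_of_ne hji]
          apply hu
          rcases lt_or_eq_of_le hj with h | h
          · exact h
          · exact absurd (Fin.ext h.symm : j = i) hji
      have h2 := key i u (by
        rw [show Function.update u i (v i) =
            Function.update (Function.update u i (v i)) i (v i) by simp] at h1 ⊢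
        exact h1) (u i)
      rwa [Function.update_eq_self] at h2
  have htprod : ∀ u : ∀ j, V j, tprod ℂ u ∈ W := fun u =>
    hall N le_rfl u (fun j hj => absurd hj (not_le.mpr j.isLt))
  -- conclude
  rw [eq_top_iff]
  intro w _
  induction w using PiTensorProduct.induction_on with
  | smul_tprod r f => exact Submodule.smul_mem W r (htprod f)
  | add a b ha hb => exact Submodule.add_mem W (ha trivial) (hb trivial)
end

section
/- Fix integers k ≥ 1, 0 ≤ l ≤ k and m = (m₁, …, m_k) ∈ ℤ_{≥0}^k such that |m| − l is a nonnegative even integer, and set s = (|m| − l)/2. Assume s ≥ k + 1. Let f ∈ ℂ[x₁, …, x_s] belong to the space 𝓕. Then for every integer a with k + 1 ≤ a ≤ s, the specialization f(x, …, x, x_{a+1}, …, x_s), obtained by setting the first a variables equal to a single variable x, is identically zero. -/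
noncomputable section

/-- `|m| = ∑ i·mᵢ` (indices `1, …, k`). -/
def wt (k : ℕ) (m : Fin k → ℕ) : ℕ := ∑ i, (i.1 + 1) * m i

/-- `M_a = ∑ min(a,i)·mᵢ`. -/
def Ma (k : ℕ) (m : Fin k → ℕ) (a : ℕ) : ℕ := ∑ i, min a (i.1 + 1) * m i

/-- The specialization `f(x, …, x, x_{a+1}, …, x_s)` (the first `a` variables set
equal to a single new variable `x`), as a polynomial in `x` with coefficients
that are polynomials in the remaining variables. -/
def spec (s a : ℕ) (f : MvPolynomial (Fin s) ℂ) :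
    Polynomial (MvPolynomial (Fin s) ℂ) :=
  MvPolynomial.aeval (fun i : Fin s =>
    if (i : ℕ) < a then (Polynomial.X : Polynomial (MvPolynomial (Fin s) ℂ))
    else Polynomial.C (MvPolynomial.X i)) f

/-- The substitution setting the first `c` variables to `0`. -/
def zeroFirst (s c : ℕ) (f : MvPolynomial (Fin s) ℂ) : MvPolynomial (Fin s) ℂ :=
  MvPolynomial.aeval (fun i : Fin s =>
    if (i : ℕ) < c then 0 else MvPolynomial.X i) f

/-- The space `𝓕` of symmetric polynomials in `s` variables satisfying:
(1) `deg_x f(x,…,x,x_{a+1},…,x_s) ≤ M_a - a` for `1 ≤ a ≤ s`;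
(2) `f(0, x₂, …, x_s) = 0`;
(3) if `s ≥ k - l + 1` then, writing `f = (∏ xᵢ)·g`, the polynomial `g`
vanishes when its first `k - l + 1` variables are set to `0`. -/
def FSpace (k l s : ℕ) (m : Fin k → ℕ) : Set (MvPolynomial (Fin s) ℂ) :=
  {f | f.IsSymmetric ∧
    (∀ a : ℕ, 1 ≤ a → a ≤ s → ∀ d : ℕ,
      (Ma k m a : ℤ) - (a : ℤ) < (d : ℤ) → (spec s a f).coeff d = 0) ∧
    zeroFirst s 1 f = 0 ∧
    (k - l + 1 ≤ s → ∀ gg : MvPolynomial (Fin s) ℂ,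
      f = (∏ i, MvPolynomial.X i) * gg → zeroFirst s (k - l + 1) gg = 0)}

/-!
Write `F_a(x) = f(x, …, x, x_{a+1}, …, x_s)` and argue by downward induction on `a`.
For `a ≥ k` we have `M_a = |m| = 2s + l`, so `deg F_a ≤ 2s + l - a`. Since `f = (∏ xᵢ) g` and,
by symmetry, no monomial of `g` has `k - l + 1` vanishing exponents, `x ^ (2a - (k - l))`
divides `F_a`. If `F_{a+1} = 0` then, by symmetry, `f` vanishes once the first `a` variables
and any further `x_j` are set equal; differentiating along that diagonal shows that the
`a + 1` partial derivatives involved agree and sum to zero, so every `x_j` with `j > a` is a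
double root of `F_a`. This gives `2a - (k - l) + 2(s - a) > 2s + l - a` roots when `a > k`,
so `F_a = 0`.
-/

open Finset
open scoped Pointwise

namespace Polynomial

theorem sum_rootMultiplicity_le_natDegree {R : Type*} [CommRing R] [IsDomain R]
    [DecidableEq R] (p : R[X]) (T : Finset R) :
    ∑ r ∈ T, p.rootMultiplicity r ≤ p.natDegree :=
  calc ∑ r ∈ T, p.rootMultiplicity r
      = ∑ r ∈ T, p.roots.count r := by simp only [count_roots]
    _ ≤ ∑ r ∈ T ∪ p.roots.toFinset, p.roots.count r := sum_le_sum_of_subset subset_union_left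
    _ = Multiset.card p.roots :=
        Multiset.sum_count_eq_card fun r hr => mem_union_right _ (Multiset.mem_toFinset.2 hr)
    _ ≤ p.natDegree := p.card_roots'

end Polynomial

theorem Finset.exists_perm_smul_eq_of_card_eq {α : Type*} [DecidableEq α] {A B : Finset α}
    (h : #A = #B) : ∃ e : Equiv.Perm α, e • A = B := by
  obtain ⟨e, he⟩ := (Set.powersetCard.isPretransitive (α := α) (n := #B)).exists_smul_eq
    ⟨A, h⟩ ⟨B, rfl⟩
  exact ⟨e, congrArg Subtype.val he⟩

theorem Finset.card_le_card_filter_eq_zero_add_sum {ι : Type*} (A : Finset ι) (μ : ι → ℕ) :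
    #A ≤ #{i ∈ A | μ i = 0} + ∑ i ∈ A, μ i := by
  rw [← card_filter_add_card_filter_not (s := A) (p := fun i => μ i = 0)]
  refine Nat.add_le_add_left ?_ _
  calc #{i ∈ A | ¬μ i = 0} ≤ ∑ i ∈ A with ¬μ i = 0, μ i := by
        simpa using card_nsmul_le_sum _ μ 1 fun i hi => Nat.one_le_iff_ne_zero.2 (mem_filter.1 hi).2
    _ ≤ ∑ i ∈ A, μ i := sum_le_sum_of_subset (filter_subset _ _)

theorem Fin.card_filter_val_lt_of_le {n c : ℕ} (h : c ≤ n) : #{i : Fin n | (i : ℕ) < c} = c := by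
  rw [Fin.card_filter_val_lt, min_eq_right h]

namespace MvPolynomial

variable {σ R : Type*}

section CommSemiring

variable [CommSemiring R]

theorem derivative_aeval [Fintype σ] {S : Type*} [CommSemiring S] [Algebra R S]
    (τ : σ → Polynomial S) (p : MvPolynomial σ R) :
    Polynomial.derivative (aeval τ p) =
      ∑ i, aeval τ (pderiv i p) * Polynomial.derivative (τ i) := by
  classical
  induction p using MvPolynomial.induction_on with
  | C c => simp
  | add p q hp hq => simp only [map_add, hp, hq, add_mul, sum_add_distrib]
  | mul_X p j hp =>
      simp only [map_mul, aeval_X, Polynomial.derivative_mul, hp, Derivation.leibniz, pderiv_X,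
        Pi.single_apply, smul_eq_mul, mul_ite, mul_one, mul_zero, map_add, apply_ite (aeval τ),
        map_zero, ite_mul, zero_mul, add_mul, sum_add_distrib, sum_ite_eq, mem_univ, if_true,
        sum_mul]
      rw [add_comm]
      exact congrArg _ (sum_congr rfl fun i _ => by ring)

theorem prod_X_dvd_of_forall_ne_zero [Fintype σ] {p : MvPolynomial σ R}
    (h : ∀ μ ∈ p.support, ∀ i, μ i ≠ 0) : ∏ i, X i ∣ p := by
  rw [← support_sum_monomial_coeff p]
  refine dvd_sum fun μ hμ => ?_
  rw [monomial_eq, Finsupp.prod_fintype _ _ fun i => pow_zero _]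
  exact dvd_mul_of_dvd_right (prod_dvd_prod_of_dvd _ _ fun i _ => dvd_pow_self _ (h μ hμ i)) _

variable [DecidableEq σ]

theorem IsSymmetric.aeval_pderiv_eq_of_apply_eq {S : Type*} [CommSemiring S] [Algebra R S]
    {p : MvPolynomial σ R} (hp : p.IsSymmetric) {χ : σ → S} {i j : σ} (hχ : χ i = χ j) :
    aeval χ (pderiv i p) = aeval χ (pderiv j p) := by
  have hswap : χ ∘ Equiv.swap i j = χ := by
    funext t
    rcases eq_or_ne t i with rfl | hti
    · simp [hχ]
    rcases eq_or_ne t j with rfl | htj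
    · simp [hχ]
    · simp [Equiv.swap_apply_of_ne_of_ne hti htj]
  have h := pderiv_rename (Equiv.swap i j).injective i p
  rw [hp, Equiv.swap_apply_left] at h
  rw [h, aeval_rename, hswap]

def zeroOn (T : Finset σ) : MvPolynomial σ R →ₐ[R] MvPolynomial σ R :=
  aeval fun i => if i ∈ T then 0 else X i

theorem zeroOn_monomial (T : Finset σ) (μ : σ →₀ ℕ) (c : R) :
    zeroOn T (monomial μ c) = if ∀ i ∈ T, μ i = 0 then monomial μ c else 0 := by
  rw [zeroOn, aeval_monomial, monomial_eq, Finsupp.prod, Finsupp.prod]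
  split_ifs with h
  · refine congrArg _ (prod_congr rfl fun i hi => ?_)
    rw [if_neg fun hiT => Finsupp.mem_support_iff.1 hi (h i hiT)]
  · obtain ⟨i, hiT, hi⟩ := not_forall₂.1 h
    rw [prod_eq_zero (Finsupp.mem_support_iff.2 hi) (by simp [hiT, hi]), mul_zero]

theorem coeff_zeroOn (T : Finset σ) (p : MvPolynomial σ R) {μ : σ →₀ ℕ}
    (hμ : ∀ i ∈ T, μ i = 0) : coeff μ (zeroOn T p) = coeff μ p := by
  induction p using MvPolynomial.induction_on' with
  | monomial ν c =>
      rw [zeroOn_monomial]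
      split_ifs with hν
      · rfl
      · rw [coeff_zero, coeff_monomial, if_neg]
        rintro rfl
        exact hν hμ
  | add p q hp hq => rw [map_add, coeff_add, coeff_add, hp, hq]

theorem IsSymmetric.zeroOn_perm_smul {p : MvPolynomial σ R} (hp : p.IsSymmetric)
    (e : Equiv.Perm σ) (T : Finset σ) : zeroOn (e • T) p = rename e (zeroOn T p) := by
  conv_lhs => rw [← hp e]
  rw [zeroOn, zeroOn, aeval_rename, comp_aeval_apply]
  congr
  funext i
  have hmem : e i ∈ e • T ↔ i ∈ T := smul_mem_smul_finset_iff e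
  by_cases hi : i ∈ T <;> simp [hmem, hi]

theorem IsSymmetric.card_lt_of_zeroOn_eq_zero {p : MvPolynomial σ R} (hp : p.IsSymmetric)
    {T : Finset σ} (hT : zeroOn T p = 0) {μ : σ →₀ ℕ} (hμ : μ ∈ p.support) {Z : Finset σ}
    (hZ : ∀ i ∈ Z, μ i = 0) : #Z < #T := by
  by_contra! hle
  obtain ⟨Z', hZ'Z, hZ'⟩ := exists_subset_card_eq hle
  obtain ⟨e, rfl⟩ := exists_perm_smul_eq_of_card_eq hZ'.symm
  have h := coeff_zeroOn (e • T) p fun i hi => hZ i (hZ'Z hi)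
  rw [hp.zeroOn_perm_smul, hT, map_zero, coeff_zero] at h
  exact mem_support_iff.1 hμ h.symm

def specOn (A : Finset σ) : MvPolynomial σ R →ₐ[R] Polynomial (MvPolynomial σ R) :=
  aeval fun i => if i ∈ A then Polynomial.X else Polynomial.C (X i)

theorem IsSymmetric.specOn_perm_smul {p : MvPolynomial σ R} (hp : p.IsSymmetric)
    (e : Equiv.Perm σ) (A : Finset σ) :
    specOn (e • A) p = Polynomial.mapAlgHom (rename e) (specOn A p) := by
  conv_lhs => rw [← hp e]
  rw [specOn, specOn, aeval_rename, comp_aeval_apply]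
  congr
  funext i
  have hmem : e i ∈ e • A ↔ i ∈ A := smul_mem_smul_finset_iff e
  by_cases hi : i ∈ A <;> simp [hmem, hi]

theorem IsSymmetric.specOn_eq_zero_of_card_eq {p : MvPolynomial σ R} (hp : p.IsSymmetric)
    {A B : Finset σ} (hA : specOn A p = 0) (hAB : #A = #B) : specOn B p = 0 := by
  obtain ⟨e, rfl⟩ := exists_perm_smul_eq_of_card_eq hAB
  rw [hp.specOn_perm_smul, hA, map_zero]

theorem eval_X_specOn (A : Finset σ) (j : σ) (p : MvPolynomial σ R) :
    (specOn A p).eval (X j) = aeval (fun i => if i ∈ A then X j else X i) p := by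
  induction p using MvPolynomial.induction_on with
  | C c => simp [specOn]
  | add p q hp hq => simp [hp, hq]
  | mul_X p i hp =>
      rw [map_mul, map_mul, Polynomial.eval_mul, hp]
      by_cases hi : i ∈ A <;> simp [specOn, hi]

theorem derivative_specOn [Fintype σ] (A : Finset σ) (p : MvPolynomial σ R) :
    Polynomial.derivative (specOn A p) = ∑ i ∈ A, specOn A (pderiv i p) := by
  rw [specOn, derivative_aeval]
  simp [apply_ite Polynomial.derivative, sum_ite_mem]

theorem IsSymmetric.eval_X_derivative_specOn [Fintype σ] {p : MvPolynomial σ R}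
    (hp : p.IsSymmetric) (A : Finset σ) (j : σ) :
    (Polynomial.derivative (specOn A p)).eval (X j) =
      #A • aeval (fun i => if i ∈ A then X j else X i) (pderiv j p) := by
  rw [derivative_specOn, Polynomial.eval_finsetSum, ← sum_const]
  refine sum_congr rfl fun i hi => ?_
  rw [eval_X_specOn]
  exact hp.aeval_pderiv_eq_of_apply_eq (by simp [hi])

theorem X_pow_dvd_specOn [Fintype σ] {A : Finset σ} {p : MvPolynomial σ R} {n : ℕ}
    (h : ∀ μ ∈ p.support, n ≤ ∑ i ∈ A, μ i) : Polynomial.X ^ n ∣ specOn A p := by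
  rw [← support_sum_monomial_coeff p, map_sum]
  refine dvd_sum fun μ hμ => ?_
  rw [specOn, aeval_monomial, Finsupp.prod_fintype _ _ fun i => pow_zero _]
  simp only [ite_pow, prod_ite, filter_mem_eq_inter, univ_inter, prod_pow_eq_pow_sum]
  exact dvd_mul_of_dvd_right ((pow_dvd_pow _ (h μ hμ)).mul_right _) _

theorem X_pow_card_dvd_specOn_prod_X [Fintype σ] (A : Finset σ) :
    Polynomial.X ^ #A ∣ specOn A (∏ i, X i : MvPolynomial σ R) := by
  rw [map_prod]
  calc Polynomial.X ^ #A = ∏ i ∈ A, specOn A (X i : MvPolynomial σ R) := by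
        rw [← prod_const]
        exact prod_congr rfl fun i hi => by simp [specOn, hi]
    _ ∣ ∏ i, specOn A (X i) := prod_dvd_prod_of_subset _ _ _ (subset_univ A)

end CommSemiring

section CommRing

variable [CommRing R] [DecidableEq σ]

theorem IsSymmetric.exists_eq_prod_X_mul [Fintype σ] [IsDomain R] {p : MvPolynomial σ R}
    (hp : p.IsSymmetric) {T : Finset σ} (hT : zeroOn T p = 0) (hT1 : #T = 1) :
    ∃ g : MvPolynomial σ R, p = (∏ i, X i) * g ∧ g.IsSymmetric := by
  obtain ⟨g, rfl⟩ := prod_X_dvd_of_forall_ne_zero fun μ hμ i hi => by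
    simpa [hT1] using hp.card_lt_of_zeroOn_eq_zero hT hμ (Z := {i}) (by simpa using hi)
  have hprod : (∏ i, X i : MvPolynomial σ R) ≠ 0 := prod_ne_zero_iff.2 fun i _ => X_ne_zero i
  refine ⟨g, rfl, fun e => mul_left_cancel₀ hprod ?_⟩
  conv_rhs => rw [← hp e, map_mul, map_prod]
  simp only [rename_X]
  rw [Equiv.prod_comp e fun i => (X i : MvPolynomial σ R)]

theorem IsSymmetric.one_lt_rootMultiplicity_specOn [Fintype σ] [IsDomain R] [CharZero R]
    {p : MvPolynomial σ R} (hp : p.IsSymmetric) {A : Finset σ} {j : σ} (hj : j ∉ A)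
    (hA : specOn A p ≠ 0) (hjA : specOn (insert j A) p = 0) :
    1 < (specOn A p).rootMultiplicity (X j) := by
  have hχ : (fun i => if i ∈ insert j A then (X j : MvPolynomial σ R) else X i) =
      fun i => if i ∈ A then (X j : MvPolynomial σ R) else X i := by
    funext i
    by_cases hij : i = j <;> simp [hij]
  -- the `#A + 1` partial derivatives along `insert j A` agree at the diagonal point and sum to 0
  have hD : aeval (fun i => if i ∈ A then (X j : MvPolynomial σ R) else X i) (pderiv j p) = 0 := by
    have h := hp.eval_X_derivative_specOn (insert j A) j
    rw [hjA, Polynomial.derivative_zero, Polynomial.eval_zero, card_insert_of_notMem hj, hχ]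
      at h
    exact (smul_eq_zero.1 h.symm).resolve_left (Nat.succ_ne_zero _)
  rw [Polynomial.one_lt_rootMultiplicity_iff_isRoot hA, Polynomial.IsRoot.def,
    Polynomial.IsRoot.def, hp.eval_X_derivative_specOn, hD, smul_zero, eval_X_specOn, ← hχ,
    ← eval_X_specOn, hjA, Polynomial.eval_zero]
  exact ⟨rfl, rfl⟩

theorem IsSymmetric.specOn_eq_zero_of_natDegree_lt [Fintype σ] [IsDomain R] [CharZero R]
    {p : MvPolynomial σ R} (hp : p.IsSymmetric) {A : Finset σ} {n : ℕ}
    (hnext : ∀ j ∉ A, specOn (insert j A) p = 0) (hn : Polynomial.X ^ n ∣ specOn A p)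
    (hdeg : (specOn A p).natDegree < n + 2 * #Aᶜ) : specOn A p = 0 := by
  classical
  by_contra hA
  have h0 : n ≤ (specOn A p).rootMultiplicity 0 := by
    rwa [Polynomial.le_rootMultiplicity_iff hA, map_zero, sub_zero]
  have hX : ∑ _j ∈ Aᶜ, 2 ≤ ∑ j ∈ Aᶜ, (specOn A p).rootMultiplicity (X j) :=
    sum_le_sum fun j hj =>
      hp.one_lt_rootMultiplicity_specOn (mem_compl.1 hj) hA (hnext j (mem_compl.1 hj))
  have hsum := Polynomial.sum_rootMultiplicity_le_natDegree (specOn A p) (insert 0 (Aᶜ.image X))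
  rw [sum_insert (by simp [X_ne_zero]), sum_image fun i _ j _ h => X_injective h] at hsum
  rw [sum_const, smul_eq_mul] at hX
  omega

end CommRing

end MvPolynomial

open MvPolynomial

theorem Ma_eq_wt {k : ℕ} (m : Fin k → ℕ) {a : ℕ} (ha : k ≤ a) : Ma k m a = wt k m :=
  sum_congr rfl fun i _ => by rw [min_eq_right (by omega)]

theorem spec_eq_specOn (s a : ℕ) (f : MvPolynomial (Fin s) ℂ) :
    spec s a f = specOn {i : Fin s | (i : ℕ) < a} f := by
  simp [spec, specOn]

theorem zeroFirst_eq_zeroOn (s c : ℕ) (f : MvPolynomial (Fin s) ℂ) :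
    zeroFirst s c f = zeroOn {i : Fin s | (i : ℕ) < c} f := by
  simp [zeroFirst, zeroOn]

section FSpace

variable {k l s : ℕ} {m : Fin k → ℕ} {f : MvPolynomial (Fin s) ℂ}

theorem natDegree_spec_le_of_mem_FSpace (hs : wt k m = 2 * s + l) (hf : f ∈ FSpace k l s m)
    {a : ℕ} (hka : k ≤ a) (ha : 1 ≤ a) (has : a ≤ s) :
    (spec s a f).natDegree ≤ 2 * s + l - a := by
  rw [Polynomial.natDegree_le_iff_coeff_eq_zero]
  intro d hd
  exact hf.2.1 a ha has d (by rw [Ma_eq_wt m hka, hs]; push_cast; omega)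

theorem exists_eq_prod_X_mul_of_mem_FSpace (hf : f ∈ FSpace k l s m) (hs : 1 ≤ s) :
    ∃ g : MvPolynomial (Fin s) ℂ, f = (∏ i, X i) * g ∧ g.IsSymmetric :=
  hf.1.exists_eq_prod_X_mul (zeroFirst_eq_zeroOn s 1 f ▸ hf.2.2.1) (Fin.card_filter_val_lt_of_le hs)

theorem X_pow_dvd_spec_of_mem_FSpace (hf : f ∈ FSpace k l s m) (hkl : k - l + 1 ≤ s) {a : ℕ}
    (has : a ≤ s) : Polynomial.X ^ (a + (a - (k - l))) ∣ spec s a f := by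
  obtain ⟨g, rfl, hg⟩ := exists_eq_prod_X_mul_of_mem_FSpace hf (by omega)
  have hzg : zeroOn {i : Fin s | (i : ℕ) < k - l + 1} g = 0 := by
    rw [← zeroFirst_eq_zeroOn]
    exact hf.2.2.2 hkl g rfl
  have hA := Fin.card_filter_val_lt_of_le has
  rw [spec_eq_specOn, map_mul, pow_add]
  refine mul_dvd_mul ?_ (X_pow_dvd_specOn fun μ hμ => ?_)
  · simpa only [hA] using X_pow_card_dvd_specOn_prod_X (R := ℂ) {i : Fin s | (i : ℕ) < a}
  have hzeros := hg.card_lt_of_zeroOn_eq_zero hzg hμ (Z := {i | (i : ℕ) < a ∧ μ i = 0}) (by simp)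
  rw [Fin.card_filter_val_lt_of_le hkl] at hzeros
  have hcount := card_le_card_filter_eq_zero_add_sum {i : Fin s | (i : ℕ) < a} μ
  rw [filter_filter, hA] at hcount
  omega

theorem spec_eq_zero_of_mem_FSpace_of_spec_succ_eq_zero (hl : l ≤ k)
    (hs : wt k m = 2 * s + l) (hf : f ∈ FSpace k l s m) {a : ℕ} (hka : k + 1 ≤ a)
    (has : a ≤ s) (hnext : a < s → spec s (a + 1) f = 0) : spec s a f = 0 := by
  have hA := Fin.card_filter_val_lt_of_le has
  have hdeg := natDegree_spec_le_of_mem_FSpace hs hf (by omega) (by omega) has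
  have hdvd := X_pow_dvd_spec_of_mem_FSpace hf (by omega) has
  rw [spec_eq_specOn] at hnext hdeg hdvd ⊢
  refine hf.1.specOn_eq_zero_of_natDegree_lt (n := a + (a - (k - l))) (fun j hj => ?_) hdvd ?_
  · have has' : a < s := by
      simpa only [hA, card_univ, Fintype.card_fin] using card_lt_univ_of_notMem hj
    refine hf.1.specOn_eq_zero_of_card_eq (hnext has') ?_
    rw [card_insert_of_notMem hj, hA, Fin.card_filter_val_lt_of_le has']
  · rw [card_compl, hA, Fintype.card_fin]
    omega

end FSpace

theorem statement14_general (k l s : ℕ) (hl : l ≤ k)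
    (m : Fin k → ℕ) (hs : wt k m = 2 * s + l) :
    ∀ f ∈ FSpace k l s m, ∀ a : ℕ, k + 1 ≤ a → a ≤ s → spec s a f = 0 := by
  intro f hf a hka has
  induction has using Nat.decreasingInduction with
  | self =>
      exact spec_eq_zero_of_mem_FSpace_of_spec_succ_eq_zero hl hs hf hka le_rfl
        (absurd · (lt_irrefl s))
  | of_succ a has ih =>
      exact spec_eq_zero_of_mem_FSpace_of_spec_succ_eq_zero hl hs hf hka has.le
        fun _ => ih (by omega)

theorem statement14 (k l s : ℕ) (hk : 1 ≤ k) (hl : l ≤ k)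
    (m : Fin k → ℕ) (hs : wt k m = 2 * s + l) (hsk : k + 1 ≤ s) :
    ∀ f ∈ FSpace k l s m, ∀ a : ℕ, k + 1 ≤ a → a ≤ s → spec s a f = 0 :=
  statement14_general k l s hl m hs
end
end
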